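/- arXiv:1812.05081 — 6 statements merged into one kernel-verified Lean document; each statement's English description precedes it below -/
import Mathlib

section
/- Finite-dimensional bounded-real lemma (Theorem 1), frequency-domain form: Let A ∈ ℝ^{n×n}, B ∈ ℝ^{n×m}, C ∈ ℝ^{q×n}, D ∈ ℝ^{q×m} and γ > 0. Suppose there exists a symmetric positive definite matrix P ∈ ℝ^{n×n} such that the symmetric block matrix [[AᵀP + PA, PB, Cᵀ], [BᵀP, −γI_m, Dᵀ], [C, D, −γI_q]] is negative semidefinite. Then for every ω ∈ ℝ such that the complex matrix iωI − A is invertible, the operator norm (with respect to Euclidean norms on ℂ^m and ℂ^q) of the transfer matrix C(iωI − A)⁻¹B + D is at most γ. -/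
/-!
Put `x = (iω - A)⁻¹ B u` and `y = C x + D u`, so that `A x + B u = iω x`. Evaluating the
complexified quadratic form of the LMI matrix at `(x, u, v)` gives
`Re (iω (x*Px + (Px)*x)) + 2 Re (v*y) - γ (|u|² + |v|²) ≤ 0`, and the first term vanishes since
`x*Px + (Px)*x` is real. The choice `v = y / γ` leaves `|y|² / γ ≤ γ |u|²`.
-/

open Matrix

namespace Matrix

variable {k l : Type*}

theorem re_star_dotProduct_map_ofReal_mulVec [Fintype k] (M : Matrix k k ℝ) (z : k → ℂ) :
    (star z ⬝ᵥ M.map (↑) *ᵥ z).re =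
      (fun i ↦ (z i).re) ⬝ᵥ M *ᵥ (fun i ↦ (z i).re) +
        (fun i ↦ (z i).im) ⬝ᵥ M *ᵥ (fun i ↦ (z i).im) := by
  simp only [dotProduct, mulVec, map_apply, Pi.star_apply, Finset.mul_sum, Complex.re_sum,
    ← Finset.sum_add_distrib]
  refine Finset.sum_congr rfl fun i _ ↦ Finset.sum_congr rfl fun j _ ↦ ?_
  simp only [Complex.mul_re, Complex.mul_im, Complex.star_def, Complex.conj_re, Complex.conj_im,
    Complex.ofReal_re, Complex.ofReal_im]
  ring

theorem re_star_dotProduct_map_ofReal_mulVec_nonpos [Fintype k] {M : Matrix k k ℝ}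
    (hM : ∀ ζ : k → ℝ, ζ ⬝ᵥ M *ᵥ ζ ≤ 0) (z : k → ℂ) :
    (star z ⬝ᵥ M.map (↑) *ᵥ z).re ≤ 0 := by
  rw [re_star_dotProduct_map_ofReal_mulVec]
  exact add_nonpos (hM _) (hM _)

theorem star_dotProduct_conjTranspose_mulVec [Fintype k] [Fintype l] (M : Matrix l k ℂ)
    (w : k → ℂ) (z : l → ℂ) : star w ⬝ᵥ Mᴴ *ᵥ z = star (star z ⬝ᵥ M *ᵥ w) := by
  rw [mulVec_conjTranspose, star_dotProduct_star, dotProduct_mulVec]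

theorem re_star_dotProduct_transpose_map_ofReal_mulVec [Fintype k] [Fintype l]
    (R : Matrix l k ℝ) (w : k → ℂ) (z : l → ℂ) :
    (star w ⬝ᵥ Rᵀ.map (↑) *ᵥ z).re = (star z ⬝ᵥ R.map (↑) *ᵥ w).re := by
  rw [show Rᵀ.map ((↑) : ℝ → ℂ) = (R.map (↑))ᴴ by ext; simp,
    star_dotProduct_conjTranspose_mulVec, Complex.star_def, Complex.conj_re]

theorem map_ofReal_mul [Fintype k] {m : Type*} (M : Matrix m k ℝ) (N : Matrix k l ℝ) :
    (M * N).map Complex.ofReal = M.map Complex.ofReal * N.map Complex.ofReal :=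
  Matrix.map_mul (f := Complex.ofRealHom)

theorem map_ofReal_smul_one [DecidableEq k] (c : ℝ) :
    (c • (1 : Matrix k k ℝ)).map Complex.ofReal = (c : ℂ) • 1 := by
  ext i j
  by_cases h : i = j <;> simp [h]

theorem re_star_dotProduct_mulVec_smul_add_eq_zero [Fintype k] (P : Matrix k k ℂ) (x : k → ℂ)
    {s : ℂ} (hs : s.re = 0) : (star x ⬝ᵥ P *ᵥ (s • x) + star (P *ᵥ x) ⬝ᵥ (s • x)).re = 0 := by
  rw [mulVec_smul, dotProduct_smul, dotProduct_smul, star_dotProduct (P *ᵥ x), smul_eq_mul,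
    smul_eq_mul, ← mul_add, Complex.star_def, Complex.add_conj, Complex.re_mul_ofReal, hs,
    zero_mul]

theorem mulVec_add_eq_smul_of_isUnit_smul_one_sub {K : Type*} [CommRing K] [Fintype k]
    [DecidableEq k] {A : Matrix k k K} {s : K} (h : IsUnit (s • 1 - A)) (b : k → K) :
    A *ᵥ ((s • 1 - A)⁻¹ *ᵥ b) + b = s • ((s • 1 - A)⁻¹ *ᵥ b) := by
  set x := (s • 1 - A)⁻¹ *ᵥ b
  have hx : (s • 1 - A) *ᵥ x = b := by
    rw [mulVec_mulVec, mul_nonsing_inv _ ((isUnit_iff_isUnit_det _).mp h), one_mulVec]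
  rw [← hx, sub_mulVec, smul_mulVec, one_mulVec]
  abel

end Matrix

theorem EuclideanSpace.norm_toLp_sq {ι : Type*} [Fintype ι] (y : ι → ℂ) :
    ‖WithLp.toLp 2 y‖ ^ 2 = (star y ⬝ᵥ y).re := by
  rw [InnerProductSpace.norm_sq_eq_re_inner (𝕜 := ℂ), EuclideanSpace.inner_toLp_toLp,
    dotProduct_comm]
  rfl

section BoundedReal

variable {n m q : Type*} [Fintype n] [Fintype m] [Fintype q] [DecidableEq m] [DecidableEq q]
  (A : Matrix n n ℝ) (B : Matrix n m ℝ) (C : Matrix q n ℝ) (D : Matrix q m ℝ)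
  (P : Matrix n n ℝ) (γ : ℝ)

def boundedRealMatrix : Matrix (n ⊕ (m ⊕ q)) (n ⊕ (m ⊕ q)) ℝ :=
  fromBlocks (Aᵀ * P + P * A) (fromCols (P * B) Cᵀ) (fromRows (Bᵀ * P) C)
    (fromBlocks (-γ • (1 : Matrix m m ℝ)) Dᵀ D (-γ • (1 : Matrix q q ℝ)))

theorem re_star_dotProduct_boundedRealMatrix_mulVec (x : n → ℂ) (u : m → ℂ) (v : q → ℂ) :
    (star (Sum.elim x (Sum.elim u v)) ⬝ᵥ
        (boundedRealMatrix A B C D P γ).map (↑) *ᵥ Sum.elim x (Sum.elim u v)).re =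
      (star x ⬝ᵥ P.map (↑) *ᵥ (A.map (↑) *ᵥ x + B.map (↑) *ᵥ u) +
          star (P.map (↑) *ᵥ x) ⬝ᵥ (A.map (↑) *ᵥ x + B.map (↑) *ᵥ u)).re +
        2 * (star v ⬝ᵥ (C.map (↑) *ᵥ x + D.map (↑) *ᵥ u)).re -
        γ * ((star u ⬝ᵥ u).re + (star v ⬝ᵥ v).re) := by
  simp only [boundedRealMatrix, fromBlocks_map, fromCols_map, fromRows_map,
    Matrix.map_add _ Complex.ofReal_add, map_ofReal_mul, fromBlocks_mulVec,
    fromCols_mulVec_sumElim, fromRows_mulVec, Function.star_sumElim, sumElim_dotProduct_sumElim,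
    Sum.elim_comp_inl, Sum.elim_comp_inr, add_mulVec, ← mulVec_mulVec, mulVec_add,
    re_star_dotProduct_transpose_map_ofReal_mulVec, map_ofReal_smul_one, smul_mulVec, one_mulVec,
    dotProduct_add, dotProduct_smul, smul_eq_mul, Complex.add_re, Complex.re_ofReal_mul]
  ring

variable {A B C D P γ}

theorem norm_toLp_le_of_boundedRealMatrix (hγ : 0 < γ)
    (hLMI : ∀ ζ, ζ ⬝ᵥ boundedRealMatrix A B C D P γ *ᵥ ζ ≤ 0) {s : ℂ} (hs : s.re = 0)
    {x : n → ℂ} {u : m → ℂ} (hx : A.map (↑) *ᵥ x + B.map (↑) *ᵥ u = s • x) :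
    ‖WithLp.toLp 2 (C.map (↑) *ᵥ x + D.map (↑) *ᵥ u)‖ ≤ γ * ‖WithLp.toLp 2 u‖ := by
  have key := re_star_dotProduct_map_ofReal_mulVec_nonpos hLMI
    (Sum.elim x (Sum.elim u ((γ⁻¹ : ℂ) • (C.map (↑) *ᵥ x + D.map (↑) *ᵥ u))))
  rw [re_star_dotProduct_boundedRealMatrix_mulVec, hx,
    re_star_dotProduct_mulVec_smul_add_eq_zero _ _ hs, star_smul, smul_dotProduct,
    smul_dotProduct, dotProduct_smul] at key
  simp only [smul_eq_mul, Complex.star_def, ← Complex.ofReal_inv, Complex.conj_ofReal,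
    Complex.re_ofReal_mul, ← EuclideanSpace.norm_toLp_sq] at key
  rw [← sq_le_sq₀ (norm_nonneg _) (by positivity), mul_pow]
  have := mul_le_mul_of_nonneg_left key hγ.le
  field_simp at this
  linarith

end BoundedReal

theorem bounded_real_lemma_frequency_domain_general
    (n m q : ℕ)
    (A : Matrix (Fin n) (Fin n) ℝ) (B : Matrix (Fin n) (Fin m) ℝ)
    (C : Matrix (Fin q) (Fin n) ℝ) (D : Matrix (Fin q) (Fin m) ℝ)
    (γ : ℝ) (hγ : 0 < γ)
    (P : Matrix (Fin n) (Fin n) ℝ)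
    (hLMI : ∀ ζ : Fin n ⊕ (Fin m ⊕ Fin q) → ℝ,
      ζ ⬝ᵥ ((Matrix.fromBlocks
          (Aᵀ * P + P * A)
          (Matrix.fromCols (P * B) Cᵀ)
          (Matrix.fromRows (Bᵀ * P) C)
          (Matrix.fromBlocks
            (-γ • (1 : Matrix (Fin m) (Fin m) ℝ)) Dᵀ
            D (-γ • (1 : Matrix (Fin q) (Fin q) ℝ)))) *ᵥ ζ) ≤ 0)
    (ω : ℝ)
    (hinv : IsUnit
      (((ω : ℂ) * Complex.I) • (1 : Matrix (Fin n) (Fin n) ℂ) - A.map Complex.ofReal)) :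
    ‖LinearMap.toContinuousLinearMap (Matrix.toEuclideanLin
        (C.map Complex.ofReal *
            (((ω : ℂ) * Complex.I) • (1 : Matrix (Fin n) (Fin n) ℂ) - A.map Complex.ofReal)⁻¹ *
            B.map Complex.ofReal
          + D.map Complex.ofReal))‖ ≤ γ := by
  refine ContinuousLinearMap.opNorm_le_bound _ hγ.le fun u ↦ ?_
  have hx := mulVec_add_eq_smul_of_isUnit_smul_one_sub hinv (B.map Complex.ofReal *ᵥ u.ofLp)
  have hs : ((ω : ℂ) * Complex.I).re = 0 := by simp
  refine le_of_eq_of_le ?_ (norm_toLp_le_of_boundedRealMatrix hγ hLMI hs hx)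
  congr 1
  change WithLp.toLp 2 (_ *ᵥ u.ofLp) = _
  rw [add_mulVec, ← mulVec_mulVec, ← mulVec_mulVec]

theorem bounded_real_lemma_frequency_domain
    (n m q : ℕ)
    (A : Matrix (Fin n) (Fin n) ℝ) (B : Matrix (Fin n) (Fin m) ℝ)
    (C : Matrix (Fin q) (Fin n) ℝ) (D : Matrix (Fin q) (Fin m) ℝ)
    (γ : ℝ) (hγ : 0 < γ)
    (P : Matrix (Fin n) (Fin n) ℝ) (hP : P.PosDef)
    (hLMI : ∀ ζ : Fin n ⊕ (Fin m ⊕ Fin q) → ℝ,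
      ζ ⬝ᵥ ((Matrix.fromBlocks
          (Aᵀ * P + P * A)
          (Matrix.fromCols (P * B) Cᵀ)
          (Matrix.fromRows (Bᵀ * P) C)
          (Matrix.fromBlocks
            (-γ • (1 : Matrix (Fin m) (Fin m) ℝ)) Dᵀ
            D (-γ • (1 : Matrix (Fin q) (Fin q) ℝ)))) *ᵥ ζ) ≤ 0)
    (ω : ℝ)
    (hinv : IsUnit
      (((ω : ℂ) * Complex.I) • (1 : Matrix (Fin n) (Fin n) ℂ) - A.map Complex.ofReal)) :
    ‖LinearMap.toContinuousLinearMap (Matrix.toEuclideanLin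
        (C.map Complex.ofReal *
            (((ω : ℂ) * Complex.I) • (1 : Matrix (Fin n) (Fin n) ℂ) - A.map Complex.ofReal)⁻¹ *
            B.map Complex.ofReal
          + D.map Complex.ofReal))‖ ≤ γ :=
  bounded_real_lemma_frequency_domain_general n m q A B C D γ hγ P hLMI ω hinv
end

section
/- Finite-dimensional positive-real (passivity) lemma (Theorem 2): Let A ∈ ℝ^{n×n}, B ∈ ℝ^{n×m}, C ∈ ℝ^{m×n}, D ∈ ℝ^{m×m}. Suppose there exists a symmetric positive definite matrix P ∈ ℝ^{n×n} such that the symmetric block matrix [[AᵀP + PA, PB − Cᵀ], [BᵀP − C, −(D + Dᵀ)]] is negative semidefinite. Let w : [0,∞) → ℝ^m be continuous, let x : [0,∞) → ℝⁿ be continuously differentiable with x(0) = 0 and x'(t) = Ax(t) + Bw(t) for all t ≥ 0, and set y(t) := Cx(t) + Dw(t). Then ∫₀^T w(t)ᵀy(t) dt ≥ 0 for every T ≥ 0; in particular, if t ↦ w(t)ᵀy(t) is integrable on [0,∞), then ∫₀^∞ w(t)ᵀy(t) dt ≥ 0. -/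
open Matrix MeasureTheory

noncomputable section

/-!
The storage function `V(x) = xᵀ P x` is nonnegative and vanishes at the initial state `x(0) = 0`.
Evaluating the negative semidefinite block form at `ζ = (x(t), w(t))` gives the dissipation
inequality `V'(t) ≤ 2 w(t)ᵀ y(t)` along trajectories, and integrating it over `[0, T]` yields
`0 ≤ V(T) ≤ 2 ∫₀ᵀ wᵀ y`. The improper integral is the limit of these finite-horizon integrals.
-/

section Derivatives

variable {𝕜 : Type*} [NontriviallyNormedField 𝕜] {ι κ : Type*} [Fintype ι]
  {u v : 𝕜 → ι → 𝕜} {u' v' : ι → 𝕜} {s : Set 𝕜} {t : 𝕜}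

theorem HasDerivWithinAt.dotProduct (hu : HasDerivWithinAt u u' s t)
    (hv : HasDerivWithinAt v v' s t) :
    HasDerivWithinAt (fun r => u r ⬝ᵥ v r) (u' ⬝ᵥ v t + u t ⬝ᵥ v') s t := by
  simpa [_root_.dotProduct, Finset.sum_add_distrib] using HasDerivWithinAt.fun_sum fun i _ =>
    (hasDerivWithinAt_pi.mp hu i).mul (hasDerivWithinAt_pi.mp hv i)

theorem HasDerivWithinAt.matrix_mulVec (M : Matrix κ ι 𝕜) (hu : HasDerivWithinAt u u' s t) :
    HasDerivWithinAt (fun r => M *ᵥ u r) (M *ᵥ u') s t :=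
  hasDerivWithinAt_pi.2 fun i => by
    simpa [mulVec] using (hasDerivWithinAt_const t s (M i)).dotProduct hu

end Derivatives

section Passivity

variable {ι κ : Type*} [Fintype ι] [Fintype κ]

def kypMatrix {R : Type*} [CommRing R] (A : Matrix ι ι R) (B : Matrix ι κ R) (C : Matrix κ ι R)
    (D : Matrix κ κ R) (P : Matrix ι ι R) : Matrix (ι ⊕ κ) (ι ⊕ κ) R :=
  fromBlocks (Aᵀ * P + P * A) (P * B - Cᵀ) (Bᵀ * P - C) (-(D + Dᵀ))

theorem storage_rate_le_two_mul_supply {R : Type*} [CommRing R] [LinearOrder R]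
    [IsStrictOrderedRing R] {A : Matrix ι ι R} {B : Matrix ι κ R} {C : Matrix κ ι R}
    {D : Matrix κ κ R} {P : Matrix ι ι R}
    (hKYP : ∀ ζ : ι ⊕ κ → R, ζ ⬝ᵥ (kypMatrix A B C D P *ᵥ ζ) ≤ 0) (u : ι → R) (v : κ → R) :
    (A *ᵥ u + B *ᵥ v) ⬝ᵥ (P *ᵥ u) + u ⬝ᵥ (P *ᵥ (A *ᵥ u + B *ᵥ v)) ≤
      2 * (v ⬝ᵥ (C *ᵥ u + D *ᵥ v)) := by
  have h := hKYP (Sum.elim u v)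
  simp only [kypMatrix, fromBlocks_mulVec, Sum.elim_comp_inl, Sum.elim_comp_inr,
    sumElim_dotProduct_sumElim, add_mulVec, sub_mulVec, neg_mulVec, mulVec_add, ← mulVec_mulVec,
    dotProduct_add, dotProduct_sub, dotProduct_neg, add_dotProduct, dotProduct_mulVec _ Aᵀ,
    dotProduct_mulVec _ Bᵀ, dotProduct_mulVec _ Cᵀ, dotProduct_mulVec _ Dᵀ, vecMul_transpose]
    at h ⊢
  rw [dotProduct_comm (C *ᵥ u) v, dotProduct_comm (D *ᵥ v) v] at h
  linarith

theorem storage_sub_le_two_mul_integral_supply {A : Matrix ι ι ℝ} {B : Matrix ι κ ℝ}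
    {C : Matrix κ ι ℝ} {D : Matrix κ κ ℝ} {P : Matrix ι ι ℝ}
    (hKYP : ∀ ζ : ι ⊕ κ → ℝ, ζ ⬝ᵥ (kypMatrix A B C D P *ᵥ ζ) ≤ 0)
    {w : ℝ → κ → ℝ} {x : ℝ → ι → ℝ} {a b : ℝ} (hab : a ≤ b)
    (hw : ContinuousOn w (Set.Icc a b))
    (hx : ∀ t ∈ Set.Icc a b, HasDerivWithinAt x (A *ᵥ x t + B *ᵥ w t) (Set.Icc a b) t) :
    x b ⬝ᵥ (P *ᵥ x b) - x a ⬝ᵥ (P *ᵥ x a) ≤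
      2 * ∫ t in a..b, w t ⬝ᵥ (C *ᵥ x t + D *ᵥ w t) := by
  have hxc : ContinuousOn x (Set.Icc a b) := fun t ht => (hx t ht).continuousWithinAt
  have hV : ∀ t ∈ Set.Ioo a b, HasDerivWithinAt (fun r => x r ⬝ᵥ (P *ᵥ x r))
      ((A *ᵥ x t + B *ᵥ w t) ⬝ᵥ (P *ᵥ x t) + x t ⬝ᵥ (P *ᵥ (A *ᵥ x t + B *ᵥ w t)))
      (Set.Ioi t) t := fun t ht =>
    let hxt := hx t (Set.Ioo_subset_Icc_self ht)
    ((hxt.dotProduct (hxt.matrix_mulVec P)).hasDerivAt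
      (Icc_mem_nhds ht.1 ht.2)).hasDerivWithinAt
  calc x b ⬝ᵥ (P *ᵥ x b) - x a ⬝ᵥ (P *ᵥ x a)
      ≤ ∫ t in a..b, 2 * (w t ⬝ᵥ (C *ᵥ x t + D *ᵥ w t)) := by
        refine intervalIntegral.sub_le_integral_of_hasDeriv_right_of_le hab
          (by simp only [_root_.dotProduct]; fun_prop) hV ?_
          fun t _ => storage_rate_le_two_mul_supply hKYP (x t) (w t)
        exact ContinuousOn.integrableOn_Icc (by simp only [_root_.dotProduct]; fun_prop)
    _ = 2 * ∫ t in a..b, w t ⬝ᵥ (C *ᵥ x t + D *ᵥ w t) := intervalIntegral.integral_const_mul _ _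

end Passivity

theorem positive_real_lemma_time_domain
    (n m : ℕ)
    (A : Matrix (Fin n) (Fin n) ℝ) (B : Matrix (Fin n) (Fin m) ℝ)
    (C : Matrix (Fin m) (Fin n) ℝ) (D : Matrix (Fin m) (Fin m) ℝ)
    (P : Matrix (Fin n) (Fin n) ℝ) (hP : P.PosDef)
    (hLMI : ∀ ζ : Fin n ⊕ Fin m → ℝ,
      ζ ⬝ᵥ ((Matrix.fromBlocks
          (Aᵀ * P + P * A) (P * B - Cᵀ)
          (Bᵀ * P - C) (-(D + Dᵀ))) *ᵥ ζ) ≤ 0)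
    (w : ℝ → Fin m → ℝ) (hw : Continuous w)
    (x : ℝ → Fin n → ℝ) (hx0 : x 0 = 0)
    (hx : ∀ t : ℝ, 0 ≤ t →
      HasDerivWithinAt x (A *ᵥ x t + B *ᵥ w t) (Set.Ici (0:ℝ)) t)
    (y : ℝ → Fin m → ℝ)
    (hy : ∀ t : ℝ, 0 ≤ t → y t = C *ᵥ x t + D *ᵥ w t) :
    (∀ T : ℝ, 0 ≤ T → 0 ≤ ∫ t in (0:ℝ)..T, w t ⬝ᵥ y t) ∧
      (IntegrableOn (fun t => w t ⬝ᵥ y t) (Set.Ioi (0:ℝ)) →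
        0 ≤ ∫ t in Set.Ioi (0:ℝ), w t ⬝ᵥ y t) := by
  have hfinite : ∀ T : ℝ, 0 ≤ T → 0 ≤ ∫ t in (0:ℝ)..T, w t ⬝ᵥ y t := by
    intro T hT
    have hdiss := storage_sub_le_two_mul_integral_supply hLMI hT hw.continuousOn
      fun t ht => (hx t ht.1).mono Set.Icc_subset_Ici_self
    have hstorage : 0 ≤ x T ⬝ᵥ (P *ᵥ x T) := by
      simpa using hP.posSemidef.dotProduct_mulVec_nonneg (x T)
    have houtput : ∫ t in (0:ℝ)..T, w t ⬝ᵥ y t = ∫ t in (0:ℝ)..T, w t ⬝ᵥ (C *ᵥ x t + D *ᵥ w t) :=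
      intervalIntegral.integral_congr fun t ht => by
        rw [Set.uIcc_of_le hT] at ht
        simp only [hy t ht.1]
    rw [houtput]
    simp only [hx0, mulVec_zero, dotProduct_zero, sub_zero] at hdiss
    linarith
  refine ⟨hfinite, fun hint => ge_of_tendsto ?_ ((Filter.eventually_ge_atTop 0).mono hfinite)⟩
  exact intervalIntegral_tendsto_integral_Ioi 0 hint Filter.tendsto_id
end
end

section
/- Infinite-dimensional bounded-real lemma (Theorem 3, part A): Let Z be a real Hilbert space, X a linear subspace of Z, and let 𝒜 : X → Z, ℬ : ℝ^m → Z, 𝒞 : X → ℝ^q, 𝒟 : ℝ^m → ℝ^q be linear maps. Let 𝒫 : Z → Z be a bounded self-adjoint linear operator for which there exists ε > 0 with ⟨z, 𝒫z⟩ ≥ ε‖z‖² for all z ∈ Z. Let γ > 0 and suppose that for all z ∈ X and u ∈ ℝ^m: ⟨z, 𝒫𝒜z⟩ + ⟨𝒜z, 𝒫z⟩ + ⟨z, 𝒫ℬu⟩ + ⟨ℬu, 𝒫z⟩ ≤ γ²|u|² − |𝒞z + 𝒟u|². Let w : [0,∞) → ℝ^m be continuous with t ↦ |w(t)|² integrable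 on [0,∞), let x : [0,∞) → Z be continuously differentiable (as a Z-valued curve) with x(t) ∈ X for all t, x(0) = 0 and x'(t) = 𝒜x(t) + ℬw(t), and set y(t) := 𝒞x(t) + 𝒟w(t); assume t ↦ |y(t)|² is integrable on [0,∞). Then ∫₀^∞ |y(t)|² dt ≤ γ² ∫₀^∞ |w(t)|² dt. -/
open Matrix MeasureTheory
open scoped RealInnerProductSpace

noncomputable section

theorem inf_dim_bounded_real_lemma
    (m q : ℕ) {Z : Type*} [NormedAddCommGroup Z] [InnerProductSpace ℝ Z]
    (X : Submodule ℝ Z)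
    (𝒜 : X →ₗ[ℝ] Z) (ℬ : (Fin m → ℝ) →ₗ[ℝ] Z)
    (𝒞 : X →ₗ[ℝ] (Fin q → ℝ)) (𝒟 : (Fin m → ℝ) →ₗ[ℝ] (Fin q → ℝ))
    (P : Z →L[ℝ] Z)
    (hsa : ∀ z₁ z₂ : Z, ⟪P z₁, z₂⟫ = ⟪z₁, P z₂⟫)
    (ε : ℝ) (hε : 0 < ε) (hcoer : ∀ z : Z, ε * ‖z‖^2 ≤ ⟪z, P z⟫)
    (γ : ℝ) (hγ : 0 < γ)
    (hineq : ∀ (z : X) (u : Fin m → ℝ),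
      ⟪(z : Z), P (𝒜 z)⟫ + ⟪𝒜 z, P (z : Z)⟫ + ⟪(z : Z), P (ℬ u)⟫ + ⟪ℬ u, P (z : Z)⟫
        ≤ γ^2 * (u ⬝ᵥ u) - (𝒞 z + 𝒟 u) ⬝ᵥ (𝒞 z + 𝒟 u))
    (w : ℝ → Fin m → ℝ) (hw : Continuous w)
    (hwint : IntegrableOn (fun t => w t ⬝ᵥ w t) (Set.Ioi (0:ℝ)))
    (x : ℝ → Z) (hxX : ∀ t : ℝ, x t ∈ X) (hx0 : x 0 = 0)
    (f : ℝ → Z) (hf : ∀ t : ℝ, f t = 𝒜 ⟨x t, hxX t⟩ + ℬ (w t))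
    (hfc : ContinuousOn f (Set.Ici (0:ℝ)))
    (hxd : ∀ t : ℝ, 0 ≤ t → HasDerivWithinAt x (f t) (Set.Ici (0:ℝ)) t)
    (y : ℝ → Fin q → ℝ)
    (hy : ∀ t : ℝ, y t = 𝒞 ⟨x t, hxX t⟩ + 𝒟 (w t))
    (hyint : IntegrableOn (fun t => y t ⬝ᵥ y t) (Set.Ioi (0:ℝ))) :
    ∫ t in Set.Ioi (0:ℝ), y t ⬝ᵥ y t ≤ γ^2 * ∫ t in Set.Ioi (0:ℝ), w t ⬝ᵥ w t := by
  set V : ℝ → ℝ := fun t => ⟪x t, P (x t)⟫ with hV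
  set φ : ℝ → ℝ := fun t => γ^2 * (w t ⬝ᵥ w t) - y t ⬝ᵥ y t with hφ
  -- derivative of V
  have hVd : ∀ t : ℝ, 0 ≤ t →
      HasDerivWithinAt V (⟪x t, P (f t)⟫ + ⟪f t, P (x t)⟫) (Set.Ici (0:ℝ)) t := by
    intro t ht
    have hPx : HasDerivWithinAt (fun s => P (x s)) (P (f t)) (Set.Ici (0:ℝ)) t :=
      P.hasFDerivAt.comp_hasDerivWithinAt t (hxd t ht)
    exact (hxd t ht).inner ℝ hPx
  -- pointwise bound on the derivative
  have hbound : ∀ t : ℝ, 0 ≤ t → ⟪x t, P (f t)⟫ + ⟪f t, P (x t)⟫ ≤ φ t := by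
    intro t ht
    have h := hineq ⟨x t, hxX t⟩ (w t)
    have hfx : f t = 𝒜 ⟨x t, hxX t⟩ + ℬ (w t) := hf t
    have hyx : y t = 𝒞 ⟨x t, hxX t⟩ + 𝒟 (w t) := hy t
    calc ⟪x t, P (f t)⟫ + ⟪f t, P (x t)⟫
        = ⟪x t, P (𝒜 ⟨x t, hxX t⟩)⟫ + ⟪𝒜 ⟨x t, hxX t⟩, P (x t)⟫
          + ⟪x t, P (ℬ (w t))⟫ + ⟪ℬ (w t), P (x t)⟫ := by
          rw [hfx]; simp [inner_add_left, inner_add_right, map_add]; ring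
      _ ≤ γ^2 * (w t ⬝ᵥ w t) - (𝒞 ⟨x t, hxX t⟩ + 𝒟 (w t)) ⬝ᵥ (𝒞 ⟨x t, hxX t⟩ + 𝒟 (w t)) := h
      _ = φ t := by simp only [hφ, hyx]
  -- V continuous on Ici 0
  have hxc : ContinuousOn x (Set.Ici (0:ℝ)) := fun t ht => (hxd t ht).continuousWithinAt
  have hVc : ContinuousOn V (Set.Ici (0:ℝ)) :=
    hxc.inner ((P.continuous.comp_continuousOn hxc))
  have hV0 : V 0 = 0 := by simp [hV, hx0]
  have hVnn : ∀ t : ℝ, 0 ≤ V t := by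
    intro t
    have := hcoer (x t)
    nlinarith [sq_nonneg ‖x t‖, norm_nonneg (x t)]
  -- φ integrable on Icc 0 b for b ≥ 0
  have hφint : ∀ b : ℝ, 0 ≤ b → IntegrableOn φ (Set.Icc 0 b) := by
    intro b hb
    rw [integrableOn_Icc_iff_integrableOn_Ioc]
    exact ((hwint.mono_set Set.Ioc_subset_Ioi_self).const_mul _).sub
      (hyint.mono_set Set.Ioc_subset_Ioi_self)
  -- key estimate on finite intervals
  have key : ∀ b : ℝ, 0 ≤ b → (∫ t in (0:ℝ)..b, (y t ⬝ᵥ y t - γ^2 * (w t ⬝ᵥ w t))) ≤ 0 := by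
    intro b hb
    have hsub : V b - V 0 ≤ ∫ t in (0:ℝ)..b, φ t := by
      apply intervalIntegral.sub_le_integral_of_hasDeriv_right_of_le hb
        (hVc.mono (Set.Icc_subset_Ici_self))
        (g' := fun t => ⟪x t, P (f t)⟫ + ⟪f t, P (x t)⟫)
        (fun t ht => (hVd t ht.1.le).mono (fun s hs => le_of_lt (lt_of_le_of_lt ht.1.le hs)))
        (hφint b hb)
        (fun t ht => hbound t ht.1.le)
    have h1 : (∫ t in (0:ℝ)..b, (y t ⬝ᵥ y t - γ^2 * (w t ⬝ᵥ w t))) = -(∫ t in (0:ℝ)..b, φ t) := by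
      rw [← intervalIntegral.integral_neg]
      congr 1; funext t; simp only [hφ]; ring
    rw [h1]
    have := hVnn b
    linarith [hsub]
  -- integrable difference
  have hdint : IntegrableOn (fun t => y t ⬝ᵥ y t - γ^2 * (w t ⬝ᵥ w t)) (Set.Ioi (0:ℝ)) :=
    hyint.sub (hwint.const_mul _)
  have htends := MeasureTheory.intervalIntegral_tendsto_integral_Ioi 0 hdint Filter.tendsto_id
  have hle : (∫ t in Set.Ioi (0:ℝ), (y t ⬝ᵥ y t - γ^2 * (w t ⬝ᵥ w t))) ≤ 0 := by
    refine le_of_tendsto htends ?_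
    filter_upwards [Filter.eventually_ge_atTop (0:ℝ)] with b hb
    exact key b hb
  have hsplit : (∫ t in Set.Ioi (0:ℝ), (y t ⬝ᵥ y t - γ^2 * (w t ⬝ᵥ w t)))
      = (∫ t in Set.Ioi (0:ℝ), y t ⬝ᵥ y t) - γ^2 * ∫ t in Set.Ioi (0:ℝ), w t ⬝ᵥ w t := by
    rw [MeasureTheory.integral_sub hyint (hwint.const_mul _),
      MeasureTheory.integral_const_mul]
  linarith [hsplit ▸ hle]
end
end

section
/- Infinite-dimensional positive-real lemma (Theorem 3, part B): Let Z be a real Hilbert space, X a linear subspace of Z, and let 𝒜 : X → Z, ℬ : ℝ^q → Z, 𝒞 : X → ℝ^q, 𝒟 : ℝ^q → ℝ^q be linear maps. Let 𝒫 : Z → Z be a bounded self-adjoint linear operator for which there exists ε > 0 with ⟨z, 𝒫z⟩ ≥ ε‖z‖² for all z ∈ Z. Suppose that for all z ∈ X and u ∈ ℝ^q: ⟨z, 𝒫𝒜z⟩ + ⟨𝒜z, 𝒫z⟩ + ⟨z, 𝒫ℬu⟩ + ⟨ℬu, 𝒫z⟩ ≤ 2⟨𝒞z + 𝒟u, u⟩.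 Let w : [0,∞) → ℝ^q be continuous, let x : [0,∞) → Z be continuously differentiable (as a Z-valued curve) with x(t) ∈ X for all t, x(0) = 0 and x'(t) = 𝒜x(t) + ℬw(t), and set y(t) := 𝒞x(t) + 𝒟w(t). Then ∫₀^T w(t)ᵀy(t) dt ≥ 0 for every T ≥ 0; in particular, if t ↦ w(t)ᵀy(t) is integrable on [0,∞), then ∫₀^∞ w(t)ᵀy(t) dt ≥ 0. -/
open Matrix MeasureTheory
open scoped RealInnerProductSpace

noncomputable section

theorem inf_dim_positive_real_lemma
    (q : ℕ) {Z : Type*} [NormedAddCommGroup Z] [InnerProductSpace ℝ Z]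
    (X : Submodule ℝ Z)
    (𝒜 : X →ₗ[ℝ] Z) (ℬ : (Fin q → ℝ) →ₗ[ℝ] Z)
    (𝒞 : X →ₗ[ℝ] (Fin q → ℝ)) (𝒟 : (Fin q → ℝ) →ₗ[ℝ] (Fin q → ℝ))
    (P : Z →L[ℝ] Z)
    (hsa : ∀ z₁ z₂ : Z, ⟪P z₁, z₂⟫ = ⟪z₁, P z₂⟫)
    (ε : ℝ) (hε : 0 < ε) (hcoer : ∀ z : Z, ε * ‖z‖^2 ≤ ⟪z, P z⟫)
    (hineq : ∀ (z : X) (u : Fin q → ℝ),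
      ⟪(z : Z), P (𝒜 z)⟫ + ⟪𝒜 z, P (z : Z)⟫ + ⟪(z : Z), P (ℬ u)⟫ + ⟪ℬ u, P (z : Z)⟫
        ≤ 2 * ((𝒞 z + 𝒟 u) ⬝ᵥ u))
    (w : ℝ → Fin q → ℝ) (hw : Continuous w)
    (x : ℝ → Z) (hxX : ∀ t : ℝ, x t ∈ X) (hx0 : x 0 = 0)
    (f : ℝ → Z) (hf : ∀ t : ℝ, f t = 𝒜 ⟨x t, hxX t⟩ + ℬ (w t))
    (hfc : ContinuousOn f (Set.Ici (0:ℝ)))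
    (hxd : ∀ t : ℝ, 0 ≤ t → HasDerivWithinAt x (f t) (Set.Ici (0:ℝ)) t)
    (y : ℝ → Fin q → ℝ)
    (hy : ∀ t : ℝ, y t = 𝒞 ⟨x t, hxX t⟩ + 𝒟 (w t)) :
    (∀ T : ℝ, 0 ≤ T → 0 ≤ ∫ t in (0:ℝ)..T, w t ⬝ᵥ y t) ∧
      (IntegrableOn (fun t => w t ⬝ᵥ y t) (Set.Ioi (0:ℝ)) →
        0 ≤ ∫ t in Set.Ioi (0:ℝ), w t ⬝ᵥ y t) := by
  -- continuity of x on Ici 0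
  have xc : ContinuousOn x (Set.Ici (0:ℝ)) := fun t ht => (hxd t ht).continuousWithinAt
  -- the Lyapunov function
  set V : ℝ → ℝ := fun t => ⟪x t, P (x t)⟫ with hV
  set g : ℝ → ℝ := fun t => ⟪x t, P (f t)⟫ + ⟪f t, P (x t)⟫ with hg
  have hgc : ContinuousOn g (Set.Ici (0:ℝ)) := by
    exact ((xc.inner ((P.continuous.comp_continuousOn hfc))).add
      (hfc.inner (P.continuous.comp_continuousOn xc)))
  have hVd : ∀ t ∈ Set.Ici (0:ℝ), HasDerivWithinAt V (g t) (Set.Ici (0:ℝ)) t := by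
    intro t ht
    have hx' := hxd t ht
    have hPx : HasDerivWithinAt (fun s => P (x s)) (P (f t)) (Set.Ici (0:ℝ)) t :=
      (P.hasFDerivAt (x := x t)).comp_hasDerivWithinAt t hx'
    exact hx'.inner ℝ hPx
  have hVc : ContinuousOn V (Set.Ici (0:ℝ)) :=
    xc.inner (P.continuous.comp_continuousOn xc)
  have hV0 : V 0 = 0 := by simp [hV, hx0]
  have hVnn : ∀ t : ℝ, 0 ≤ V t := fun t =>
    le_trans (by positivity) (hcoer (x t))
  -- key dissipation inequality
  have hle : ∀ t : ℝ, g t ≤ 2 * (w t ⬝ᵥ y t) := by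
    intro t
    have h := hineq ⟨x t, hxX t⟩ (w t)
    have hfx : f t = (𝒜 ⟨x t, hxX t⟩ : Z) + ℬ (w t) := hf t
    have : g t = ⟪(x t : Z), P (𝒜 ⟨x t, hxX t⟩)⟫ + ⟪(𝒜 ⟨x t, hxX t⟩ : Z), P (x t)⟫
        + ⟪(x t : Z), P (ℬ (w t))⟫ + ⟪(ℬ (w t) : Z), P (x t)⟫ := by
      simp only [hg, hfx, map_add, inner_add_left, inner_add_right]
      ring
    rw [this, hy t]
    calc _ ≤ 2 * ((𝒞 ⟨x t, hxX t⟩ + 𝒟 (w t)) ⬝ᵥ w t) := h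
      _ = 2 * (w t ⬝ᵥ (𝒞 ⟨x t, hxX t⟩ + 𝒟 (w t))) := by rw [dotProduct_comm]
  -- main claim for finite horizons
  have key : ∀ T : ℝ, 0 ≤ T → 0 ≤ ∫ t in (0:ℝ)..T, w t ⬝ᵥ y t := by
    intro T hT
    by_cases hint : IntervalIntegrable (fun t => w t ⬝ᵥ y t) volume 0 T
    · have hIcc : Set.Icc (0:ℝ) T ⊆ Set.Ici 0 := Set.Icc_subset_Ici_self
      have hgint : IntervalIntegrable g volume 0 T :=
        (hgc.mono hIcc).intervalIntegrable_of_Icc hT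
      have hftc : ∫ t in (0:ℝ)..T, g t = V T - V 0 := by
        apply intervalIntegral.integral_eq_sub_of_hasDeriv_right_of_le hT
          (hVc.mono hIcc) ?_ hgint
        intro t ht
        exact (hVd t (le_of_lt ht.1)).mono (fun s hs => le_of_lt (lt_trans ht.1 hs))
      have hmono : ∫ t in (0:ℝ)..T, g t ≤ ∫ t in (0:ℝ)..T, 2 * (w t ⬝ᵥ y t) :=
        intervalIntegral.integral_mono_on hT hgint (hint.const_mul 2)
          (fun t _ => hle t)
      have h2 : ∫ t in (0:ℝ)..T, 2 * (w t ⬝ᵥ y t)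
          = 2 * ∫ t in (0:ℝ)..T, w t ⬝ᵥ y t := by
        simp [intervalIntegral.integral_const_mul]
      nlinarith [hVnn T, hftc, hmono, h2, hV0]
    · rw [intervalIntegral.integral_undef hint]
  refine ⟨key, fun hInt => ?_⟩
  have htend : Filter.Tendsto (fun T => ∫ t in (0:ℝ)..T, w t ⬝ᵥ y t)
      Filter.atTop (nhds (∫ t in Set.Ioi (0:ℝ), w t ⬝ᵥ y t)) :=
    intervalIntegral_tendsto_integral_Ioi 0 hInt Filter.tendsto_id
  exact ge_of_tendsto htend ((Filter.eventually_ge_atTop 0).mono fun T hT => key T hT)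
end
end

section
/- Second-derivative representation of the first spatial derivative: for every x ∈ X and every s ∈ [0,L], x'(s) = ∫₀ᴸ G₂(s,η) x''(η) dη. -/
open Matrix MeasureTheory intervalIntegral

noncomputable section

/-- The stacked boundary-value vector `col(a, b, c, d) ∈ ℝ^{4n}`. -/
def col4 {n : ℕ} (a b c d : Fin n → ℝ) : (Fin n ⊕ Fin n) ⊕ (Fin n ⊕ Fin n) → ℝ :=
  Sum.elim (Sum.elim a b) (Sum.elim c d)

/-- The `4n × 2n` matrix `K` with block rows `[I,0], [I,L·I], [0,I], [0,I]`. -/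
def Kmat (n : ℕ) (L : ℝ) :
    Matrix ((Fin n ⊕ Fin n) ⊕ (Fin n ⊕ Fin n)) (Fin n ⊕ Fin n) ℝ :=
  Matrix.fromRows
    (Matrix.fromRows (Matrix.fromCols 1 0) (Matrix.fromCols 1 (L • 1)))
    (Matrix.fromRows (Matrix.fromCols 0 1) (Matrix.fromCols 0 1))

/-- The `4n × n` block column `col(0, (L−η)I, 0, I)`. -/
def colB (n : ℕ) (L η : ℝ) :
    Matrix ((Fin n ⊕ Fin n) ⊕ (Fin n ⊕ Fin n)) (Fin n) ℝ :=
  Matrix.fromRows (Matrix.fromRows 0 ((L - η) • 1)) (Matrix.fromRows 0 1)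

/-- `B_c(η) := −(B·K)⁻¹·B·col(0, (L−η)I, 0, I)`. -/
def Bc {n : ℕ} (L : ℝ) (B : Matrix (Fin n ⊕ Fin n) ((Fin n ⊕ Fin n) ⊕ (Fin n ⊕ Fin n)) ℝ)
    (η : ℝ) : Matrix (Fin n ⊕ Fin n) (Fin n) ℝ :=
  -((B * Kmat n L)⁻¹ * (B * colB n L η))

/-- `G₁(s,η) := [I, s·I]·B_c(η) + 1_{[η,L]}(s)·(s−η)·I`. -/
def G1 {n : ℕ} (L : ℝ) (B : Matrix (Fin n ⊕ Fin n) ((Fin n ⊕ Fin n) ⊕ (Fin n ⊕ Fin n)) ℝ)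
    (s η : ℝ) : Matrix (Fin n) (Fin n) ℝ :=
  Matrix.fromCols 1 (s • 1) * Bc L B η + (if η ≤ s then s - η else 0) • 1

/-- `G₂(s,η) := [0, I]·B_c(η) + 1_{[η,L]}(s)·I`. -/
def G2 {n : ℕ} (L : ℝ) (B : Matrix (Fin n ⊕ Fin n) ((Fin n ⊕ Fin n) ⊕ (Fin n ⊕ Fin n)) ℝ)
    (s η : ℝ) : Matrix (Fin n) (Fin n) ℝ :=
  Matrix.fromCols 0 1 * Bc L B η + (if η ≤ s then (1:ℝ) else 0) • 1

/-- Membership in `X`: `x` is twice continuously differentiable on `[0,L]`, with first and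
second derivative witnesses `x'` and `x''`, and satisfies the boundary conditions. -/
structure InX {n : ℕ} (L : ℝ)
    (B : Matrix (Fin n ⊕ Fin n) ((Fin n ⊕ Fin n) ⊕ (Fin n ⊕ Fin n)) ℝ)
    (x x' x'' : ℝ → Fin n → ℝ) : Prop where
  deriv1 : ∀ s ∈ Set.Icc (0:ℝ) L, HasDerivWithinAt x (x' s) (Set.Icc (0:ℝ) L) s
  deriv2 : ∀ s ∈ Set.Icc (0:ℝ) L, HasDerivWithinAt x' (x'' s) (Set.Icc (0:ℝ) L) s
  cont : ContinuousOn x'' (Set.Icc (0:ℝ) L)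
  bc : B *ᵥ col4 (x 0) (x L) (x' 0) (x' L) = 0

/-!
Put `v(η) = col(0, (L−η)x''(η), 0, x''(η)) = col(0, (L−η)I, 0, I) x''(η)`, so that
`B_c(η) x''(η) = −B₂⁻¹ B v(η)`. Taylor's formula with integral remainder and the fundamental
theorem of calculus give `∫₀ᴸ v = col(x(0), x(L), x'(0), x'(L)) − K col(x(0), x'(0))`, and the
boundary condition annihilates the first term under `B`. Hence `∫₀ᴸ B_c x'' = col(x(0), x'(0))`:
the `[0, I] B_c` part of `G₂` reproduces `x'(0)`, and the indicator part contributes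
`∫₀ˢ x'' = x'(s) − x'(0)`.
-/

open Set

section Calculus

variable {E : Type*} [NormedAddCommGroup E] [NormedSpace ℝ E] [CompleteSpace E]
  {a b : ℝ} {f f' f'' : ℝ → E}

theorem integral_eq_sub_of_hasDerivWithinAt_Icc (hab : a ≤ b)
    (hf : ∀ t ∈ Icc a b, HasDerivWithinAt f (f' t) (Icc a b) t)
    (hf' : ContinuousOn f' (Icc a b)) :
    ∫ t in a..b, f' t = f b - f a :=
  integral_eq_sub_of_hasDeriv_right_of_le hab (fun t ht => (hf t ht).continuousWithinAt)
    (fun t ht => ((hf t (Ioo_subset_Icc_self ht)).hasDerivAt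
      (Icc_mem_nhds ht.1 ht.2)).hasDerivWithinAt)
    (hf'.intervalIntegrable_of_Icc hab)

theorem integral_sub_smul_eq_sub_sub_smul (hab : a ≤ b)
    (hf : ∀ t ∈ Icc a b, HasDerivWithinAt f (f' t) (Icc a b) t)
    (hf' : ∀ t ∈ Icc a b, HasDerivWithinAt f' (f'' t) (Icc a b) t)
    (hf'' : ContinuousOn f'' (Icc a b)) :
    ∫ t in a..b, (b - t) • f'' t = f b - f a - (b - a) • f' a := by
  have hderiv : ∀ t ∈ Icc a b,
      HasDerivWithinAt (fun t => (b - t) • f' t + f t) ((b - t) • f'' t) (Icc a b) t := by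
    intro t ht
    convert (((hasDerivWithinAt_id t _).const_sub b).smul (hf' t ht)).add (hf t ht) using 1
    · rfl
    · simp
  rw [integral_eq_sub_of_hasDerivWithinAt_Icc hab hderiv
    ((continuousOn_const.sub continuousOn_id).smul hf'')]
  simp only [sub_self, zero_smul, zero_add]
  abel

theorem intervalIntegral_pi_apply {ι : Type*} [Fintype ι] {f : ℝ → ι → E}
    (hf : IntervalIntegrable f volume a b) (i : ι) :
    (∫ t in a..b, f t) i = ∫ t in a..b, f t i :=
  ((ContinuousLinearMap.proj (R := ℝ) (φ := fun _ : ι => E) i).intervalIntegral_comp_comm hf).symm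

end Calculus

section MatrixMulVec

variable {m k : Type*} [Fintype m] [Fintype k] {a b : ℝ} {f : ℝ → k → ℝ}

theorem IntervalIntegrable.matrix_mulVec (M : Matrix m k ℝ) (hf : IntervalIntegrable f volume a b) :
    IntervalIntegrable (fun t => M *ᵥ f t) volume a b :=
  ⟨(LinearMap.toContinuousLinearMap M.mulVecLin).integrable_comp hf.1,
    (LinearMap.toContinuousLinearMap M.mulVecLin).integrable_comp hf.2⟩

theorem Matrix.intervalIntegral_mulVec (M : Matrix m k ℝ) (hf : IntervalIntegrable f volume a b) :
    ∫ t in a..b, M *ᵥ f t = M *ᵥ ∫ t in a..b, f t :=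
  (LinearMap.toContinuousLinearMap M.mulVecLin).intervalIntegral_comp_comm hf

end MatrixMulVec

section BlockVectors

variable {n : ℕ} {a b : ℝ} {f g h k : ℝ → Fin n → ℝ}

theorem ContinuousOn.col4 {s : Set ℝ} (hf : ContinuousOn f s) (hg : ContinuousOn g s)
    (hh : ContinuousOn h s) (hk : ContinuousOn k s) :
    ContinuousOn (fun t => col4 (f t) (g t) (h t) (k t)) s :=
  continuousOn_pi.2 fun i => by
    rcases i with (i | i) | (i | i) <;> exact (continuous_apply i).comp_continuousOn ‹_›

theorem intervalIntegral_col4 (hab : a ≤ b) (hf : ContinuousOn f (Icc a b))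
    (hg : ContinuousOn g (Icc a b)) (hh : ContinuousOn h (Icc a b))
    (hk : ContinuousOn k (Icc a b)) :
    ∫ t in a..b, col4 (f t) (g t) (h t) (k t) =
      col4 (∫ t in a..b, f t) (∫ t in a..b, g t) (∫ t in a..b, h t) (∫ t in a..b, k t) := by
  funext i
  rw [intervalIntegral_pi_apply ((hf.col4 hg hh hk).intervalIntegrable_of_Icc hab)]
  rcases i with (i | i) | (i | i)
  exacts [(intervalIntegral_pi_apply (hf.intervalIntegrable_of_Icc hab) i).symm,
    (intervalIntegral_pi_apply (hg.intervalIntegrable_of_Icc hab) i).symm,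
    (intervalIntegral_pi_apply (hh.intervalIntegrable_of_Icc hab) i).symm,
    (intervalIntegral_pi_apply (hk.intervalIntegrable_of_Icc hab) i).symm]

theorem colB_mulVec (L η : ℝ) (v : Fin n → ℝ) :
    colB n L η *ᵥ v = col4 0 ((L - η) • v) 0 v := by
  funext i
  rcases i with (i | i) | (i | i) <;> simp [colB, col4, Matrix.smul_mulVec]

theorem col4_sub_Kmat_mulVec (L : ℝ) (p q r w : Fin n → ℝ) :
    col4 p q r w - Kmat n L *ᵥ Sum.elim p r = col4 0 (q - p - L • r) 0 (w - r) := by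
  funext i
  rcases i with (i | i) | (i | i) <;>
    simp [Kmat, col4, Matrix.fromBlocks_mulVec, Matrix.smul_mulVec]
  ring

theorem intervalIntegrable_colB_mulVec {L : ℝ} (hab : a ≤ b) (hf : ContinuousOn f (Icc a b)) :
    IntervalIntegrable (fun η => colB n L η *ᵥ f η) volume a b := by
  simp_rw [colB_mulVec]
  exact (continuousOn_const.col4 ((continuousOn_const.sub continuousOn_id).smul hf)
    continuousOn_const hf).intervalIntegrable_of_Icc hab

end BlockVectors

section GreenFunction

variable {n : ℕ} {L : ℝ} {B : Matrix (Fin n ⊕ Fin n) ((Fin n ⊕ Fin n) ⊕ (Fin n ⊕ Fin n)) ℝ}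
  {x x' x'' : ℝ → Fin n → ℝ}

theorem integral_colB_mulVec (hL : 0 ≤ L)
    (hx : ∀ t ∈ Icc 0 L, HasDerivWithinAt x (x' t) (Icc 0 L) t)
    (hx' : ∀ t ∈ Icc 0 L, HasDerivWithinAt x' (x'' t) (Icc 0 L) t)
    (hx'' : ContinuousOn x'' (Icc 0 L)) :
    ∫ η in (0:ℝ)..L, colB n L η *ᵥ x'' η =
      col4 (x 0) (x L) (x' 0) (x' L) - Kmat n L *ᵥ Sum.elim (x 0) (x' 0) := by
  simp_rw [colB_mulVec, col4_sub_Kmat_mulVec]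
  rw [intervalIntegral_col4 (g := fun η => (L - η) • x'' η) hL continuousOn_const
      ((continuousOn_const.sub continuousOn_id).smul hx'') continuousOn_const hx'',
    intervalIntegral.integral_zero, integral_sub_smul_eq_sub_sub_smul hL hx hx' hx'',
    integral_eq_sub_of_hasDerivWithinAt_Icc hL hx' hx'', sub_zero]

theorem Bc_mulVec (η : ℝ) (v : Fin n → ℝ) :
    Bc L B η *ᵥ v = -((B * Kmat n L)⁻¹ * B) *ᵥ (colB n L η *ᵥ v) := by
  rw [Bc, Matrix.mulVec_mulVec, Matrix.neg_mul, Matrix.mul_assoc]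

theorem intervalIntegrable_Bc_mulVec {a b : ℝ} {f : ℝ → Fin n → ℝ} (hab : a ≤ b)
    (hf : ContinuousOn f (Icc a b)) :
    IntervalIntegrable (fun η => Bc L B η *ᵥ f η) volume a b := by
  simp_rw [Bc_mulVec]
  exact (intervalIntegrable_colB_mulVec hab hf).matrix_mulVec _

theorem integral_Bc_mulVec (hL : 0 ≤ L) (hB : IsUnit (B * Kmat n L))
    (hX : InX L B x x' x'') :
    ∫ η in (0:ℝ)..L, Bc L B η *ᵥ x'' η = Sum.elim (x 0) (x' 0) := by
  have hdet : IsUnit (B * Kmat n L).det := (Matrix.isUnit_iff_isUnit_det _).mp hB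
  simp_rw [Bc_mulVec]
  rw [Matrix.intervalIntegral_mulVec _ (intervalIntegrable_colB_mulVec hL hX.cont),
    integral_colB_mulVec hL hX.deriv1 hX.deriv2 hX.cont, Matrix.neg_mulVec,
    ← Matrix.mulVec_mulVec, Matrix.mulVec_sub, hX.bc, zero_sub, Matrix.mulVec_neg, neg_neg,
    Matrix.mulVec_mulVec, Matrix.mulVec_mulVec, Matrix.mul_assoc, Matrix.nonsing_inv_mul _ hdet,
    Matrix.one_mulVec]

theorem G2_mulVec (s η : ℝ) (f : ℝ → Fin n → ℝ) :
    G2 L B s η *ᵥ f η =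
      Matrix.fromCols 0 1 *ᵥ (Bc L B η *ᵥ f η) + {u | u ≤ s}.indicator f η := by
  -- the product in `G2` elaborates through the `CStarMatrix` `HMul` instance: equal only by `rfl`
  by_cases h : η ≤ s <;> simp [G2, Matrix.add_mulVec, Matrix.mulVec_mulVec, h] <;> rfl

end GreenFunction

theorem second_derivative_representation_of_first_derivative_general
    (n : ℕ) (L : ℝ)
    (B : Matrix (Fin n ⊕ Fin n) ((Fin n ⊕ Fin n) ⊕ (Fin n ⊕ Fin n)) ℝ)
    (hB : IsUnit (B * Kmat n L))
    (x x' x'' : ℝ → Fin n → ℝ) (hX : InX L B x x' x'')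
    (s : ℝ) (hs : s ∈ Set.Icc (0:ℝ) L) :
    x' s = ∫ η in (0:ℝ)..L, G2 L B s η *ᵥ x'' η := by
  obtain ⟨hs0, hsL⟩ := hs
  have hL : 0 ≤ L := hs0.trans hsL
  have hBc : IntervalIntegrable (fun η => Bc L B η *ᵥ x'' η) volume 0 L :=
    intervalIntegrable_Bc_mulVec hL hX.cont
  have hind : IntervalIntegrable ({u | u ≤ s}.indicator x'') volume 0 L := by
    rw [intervalIntegrable_iff_integrableOn_Ioc_of_le hL]
    exact (hX.cont.integrableOn_Icc.mono_set Ioc_subset_Icc_self).indicator measurableSet_Iic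
  have hsub : Icc 0 s ⊆ Icc 0 L := Icc_subset_Icc_right hsL
  have hFTC : ∫ η in (0:ℝ)..s, x'' η = x' s - x' 0 :=
    integral_eq_sub_of_hasDerivWithinAt_Icc hs0
      (fun t ht => (hX.deriv2 t (hsub ht)).mono hsub) (hX.cont.mono hsub)
  simp_rw [G2_mulVec]
  rw [intervalIntegral.integral_add (hBc.matrix_mulVec _) hind,
    Matrix.intervalIntegral_mulVec _ hBc, integral_Bc_mulVec hL hB hX,
    intervalIntegral.integral_indicator ⟨hs0, hsL⟩, hFTC, Matrix.fromCols_mulVec_sumElim]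
  simp

theorem second_derivative_representation_of_first_derivative
    (n : ℕ) (hn : 1 ≤ n) (L : ℝ) (hL : 0 < L)
    (B : Matrix (Fin n ⊕ Fin n) ((Fin n ⊕ Fin n) ⊕ (Fin n ⊕ Fin n)) ℝ)
    (hB : IsUnit (B * Kmat n L))
    (x x' x'' : ℝ → Fin n → ℝ) (hX : InX L B x x' x'')
    (s : ℝ) (hs : s ∈ Set.Icc (0:ℝ) L) :
    x' s = ∫ η in (0:ℝ)..L, G2 L B s η *ᵥ x'' η :=
  second_derivative_representation_of_first_derivative_general n L B hB x x' x'' hX s hs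
end
end

section
/- Square-root factorization identity used to prove Theorem 7: Let U₁ ∈ ℝ^{d×m}, U₂, U₃ ∈ ℝ^{d×d₂}, set T := [U₁ U₂ U₃]ᵀ[U₁ U₂ U₃] (so T_{ij} = UᵢᵀUⱼ), and let (P̂, Q, R₁, R₂) be given by the (Z, T) joint positivity formulas. For x₁ ∈ ℝ^m and continuous x₂ : [0,L] → ℝⁿ define v(s) := U₁x₁ + ∫₀ˢ U₂Z(s,θ)x₂(θ)dθ + ∫ₛᴸ U₃Z(s,θ)x₂(θ)dθ. Then ∫₀ᴸ |v(s)|² ds = L·x₁ᵀP̂x₁ + 2x₁ᵀ∫₀ᴸ Q(θ)x₂(θ)dθ + ∫₀ᴸ∫₀ˢ x₂(s)ᵀR₁(s,θ)x₂(θ)dθds + ∫₀ᴸ∫ₛᴸ x₂(s)ᵀR₂(s,θ)x₂(θ)dθds. -/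
/-!
Write `v(s) = U₁x₁ + ∫₀ᴸ k(s,θ) dθ`, where `k(s,θ) = U₂ Z(s,θ) x₂(θ)` for `θ ≤ s` and
`k(s,θ) = U₃ Z(s,θ) x₂(θ)` for `θ > s`. Expanding `|v(s)|²` and applying Fubini gives
`∫|v|² = L |U₁x₁|² + 2 x₁ᵀ ∫_θ ∫_s U₁ᵀ k(s,θ) + ∫_θ ∫_t ∫_s k(s,θ)ᵀ k(s,t)`.
As `s` crosses the second argument of `k`, the kernel switches from `U₃` to `U₂`. So splitting
each inner `s`-integral at `θ` and `t` brings in the blocks `Tᵢⱼ = UᵢᵀUⱼ`, and the `s`-integrals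
become `Q(θ) x₂(θ)` and `x₂(θ)ᵀ R(θ,t) x₂(t)`, with `R = R₁` for `t ≤ θ` and `R = R₂` for `θ ≤ t`.
The kernel is evaluated at arguments clamped to `[0,L]`, so it is bounded and measurable on
all of `ℝ²`.
-/

open Matrix MeasureTheory intervalIntegral

noncomputable section

attribute [local instance] Matrix.normedAddCommGroup Matrix.normedSpace

/-- `(M, N₁, N₂)` is given by the `(Z₁, Z, T)` positivity formulas (Theorem 6). -/
def PosFormulas (n d₁ d₂ : ℕ) (L : ℝ)
    (Z1 : ℝ → Matrix (Fin d₁) (Fin n) ℝ) (Z : ℝ → ℝ → Matrix (Fin d₂) (Fin n) ℝ)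
    (T : Matrix (Fin d₁ ⊕ (Fin d₂ ⊕ Fin d₂)) (Fin d₁ ⊕ (Fin d₂ ⊕ Fin d₂)) ℝ)
    (M : ℝ → Matrix (Fin n) (Fin n) ℝ) (N1 N2 : ℝ → ℝ → Matrix (Fin n) (Fin n) ℝ) : Prop :=
  (∀ s : ℝ, M s = (Z1 s)ᵀ * T.submatrix Sum.inl Sum.inl * Z1 s) ∧
  (∀ s θ : ℝ, θ ≤ s →
    N1 s θ = (Z1 s)ᵀ * T.submatrix Sum.inl (Sum.inr ∘ Sum.inl) * Z s θ
      + (Z θ s)ᵀ * T.submatrix (Sum.inr ∘ Sum.inr) Sum.inl * Z1 θ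
      + (∫ β in s..L, (Z β s)ᵀ * T.submatrix (Sum.inr ∘ Sum.inl) (Sum.inr ∘ Sum.inl) * Z β θ)
      + (∫ β in θ..s, (Z β s)ᵀ * T.submatrix (Sum.inr ∘ Sum.inr) (Sum.inr ∘ Sum.inl) * Z β θ)
      + ∫ β in (0:ℝ)..θ,
          (Z β s)ᵀ * T.submatrix (Sum.inr ∘ Sum.inr) (Sum.inr ∘ Sum.inr) * Z β θ) ∧
  (∀ s θ : ℝ, s ≤ θ → N2 s θ = (N1 θ s)ᵀ)

/-- `(P̂, Q, R₁, R₂)` is given by the `(Z, T)` joint positivity formulas (Theorem 7). -/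
def JointFormulas (n m d₂ : ℕ) (L : ℝ)
    (Z : ℝ → ℝ → Matrix (Fin d₂) (Fin n) ℝ)
    (T : Matrix (Fin m ⊕ (Fin d₂ ⊕ Fin d₂)) (Fin m ⊕ (Fin d₂ ⊕ Fin d₂)) ℝ)
    (Ph : Matrix (Fin m) (Fin m) ℝ) (Q : ℝ → Matrix (Fin m) (Fin n) ℝ)
    (R1 R2 : ℝ → ℝ → Matrix (Fin n) (Fin n) ℝ) : Prop :=
  Ph = T.submatrix Sum.inl Sum.inl ∧
  (∀ θ : ℝ, Q θ = (∫ s in θ..L, T.submatrix Sum.inl (Sum.inr ∘ Sum.inl) * Z s θ)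
      + ∫ s in (0:ℝ)..θ, T.submatrix Sum.inl (Sum.inr ∘ Sum.inr) * Z s θ) ∧
  (∀ s θ : ℝ, θ ≤ s →
    R1 s θ = (∫ β in s..L, (Z β s)ᵀ * T.submatrix (Sum.inr ∘ Sum.inl) (Sum.inr ∘ Sum.inl) * Z β θ)
      + (∫ β in θ..s, (Z β s)ᵀ * T.submatrix (Sum.inr ∘ Sum.inr) (Sum.inr ∘ Sum.inl) * Z β θ)
      + ∫ β in (0:ℝ)..θ,
          (Z β s)ᵀ * T.submatrix (Sum.inr ∘ Sum.inr) (Sum.inr ∘ Sum.inr) * Z β θ) ∧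
  (∀ s θ : ℝ, s ≤ θ →
    R2 s θ = (∫ β in θ..L, (Z β s)ᵀ * T.submatrix (Sum.inr ∘ Sum.inl) (Sum.inr ∘ Sum.inl) * Z β θ)
      + (∫ β in s..θ, (Z β s)ᵀ * T.submatrix (Sum.inr ∘ Sum.inl) (Sum.inr ∘ Sum.inr) * Z β θ)
      + ∫ β in (0:ℝ)..s,
          (Z β s)ᵀ * T.submatrix (Sum.inr ∘ Sum.inr) (Sum.inr ∘ Sum.inr) * Z β θ)

open Set Function

structure BoundedStronglyMeasurable {α E : Type*} [MeasurableSpace α] [NormedAddCommGroup E]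
    (f : α → E) : Prop where
  stronglyMeasurable : StronglyMeasurable f
  exists_bound : ∃ C, ∀ x, ‖f x‖ ≤ C

namespace BoundedStronglyMeasurable

variable {α β E F G : Type*} [MeasurableSpace α] [MeasurableSpace β]
  [NormedAddCommGroup E] [NormedAddCommGroup F] [NormedAddCommGroup G]

theorem integrable {f : α → E} (hf : BoundedStronglyMeasurable f) (μ : Measure α)
    [IsFiniteMeasure μ] : Integrable f μ :=
  let ⟨C, hC⟩ := hf.exists_bound
  .of_bound hf.stronglyMeasurable.aestronglyMeasurable C (ae_of_all _ hC)

theorem intervalIntegrable {f : ℝ → E} (hf : BoundedStronglyMeasurable f) (a b : ℝ) :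
    IntervalIntegrable f volume a b :=
  ⟨hf.integrable _, hf.integrable _⟩

theorem comp_measurable {f : β → E} (hf : BoundedStronglyMeasurable f) {φ : α → β}
    (hφ : Measurable φ) : BoundedStronglyMeasurable (f ∘ φ) :=
  let ⟨C, hC⟩ := hf.exists_bound
  ⟨hf.stronglyMeasurable.comp_measurable hφ, C, fun x => hC (φ x)⟩

theorem of_uncurry_left {f : α → β → E} (hf : BoundedStronglyMeasurable (uncurry f)) (x : α) :
    BoundedStronglyMeasurable (f x) :=
  hf.comp_measurable measurable_prodMk_left

theorem of_uncurry_right {f : α → β → E} (hf : BoundedStronglyMeasurable (uncurry f)) (y : β) :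
    BoundedStronglyMeasurable fun x => f x y :=
  hf.comp_measurable measurable_prodMk_right

theorem zero : BoundedStronglyMeasurable (0 : α → E) :=
  ⟨stronglyMeasurable_zero, 0, by simp⟩

theorem ite {p : α → Prop} [DecidablePred p] (hp : MeasurableSet {x | p x}) {f g : α → E}
    (hf : BoundedStronglyMeasurable f) (hg : BoundedStronglyMeasurable g) :
    BoundedStronglyMeasurable fun x => if p x then f x else g x :=
  let ⟨C, hC⟩ := hf.exists_bound
  let ⟨D, hD⟩ := hg.exists_bound
  ⟨hf.stronglyMeasurable.ite hp hg.stronglyMeasurable, max C D, fun x => by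
    split_ifs
    exacts [(hC x).trans (le_max_left C D), (hD x).trans (le_max_right C D)]⟩

variable [NormedSpace ℝ E] [NormedSpace ℝ F] [NormedSpace ℝ G]

theorem clm (ℓ : E →L[ℝ] F) {f : α → E} (hf : BoundedStronglyMeasurable f) :
    BoundedStronglyMeasurable fun x => ℓ (f x) :=
  let ⟨C, hC⟩ := hf.exists_bound
  ⟨ℓ.continuous.comp_stronglyMeasurable hf.stronglyMeasurable, ‖ℓ‖ * C, fun x =>
    (ℓ.le_opNorm _).trans (mul_le_mul_of_nonneg_left (hC x) (norm_nonneg ℓ))⟩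

theorem clm₂ (B : E →L[ℝ] F →L[ℝ] G) {f : α → E} {g : α → F}
    (hf : BoundedStronglyMeasurable f) (hg : BoundedStronglyMeasurable g) :
    BoundedStronglyMeasurable fun x => B (f x) (g x) :=
  let ⟨C, hC⟩ := hf.exists_bound
  let ⟨D, hD⟩ := hg.exists_bound
  ⟨B.continuous₂.comp_stronglyMeasurable (hf.stronglyMeasurable.prodMk hg.stronglyMeasurable),
    ‖B‖ * C * D, fun x => (B.le_opNorm₂ _ _).trans <|
      mul_le_mul (mul_le_mul_of_nonneg_left (hC x) (norm_nonneg B)) (hD x) (norm_nonneg _)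
        (mul_nonneg (norm_nonneg B) ((norm_nonneg _).trans (hC x)))⟩

theorem integral_prod_right {ν : Measure β} [IsFiniteMeasure ν] {f : α → β → E}
    (hf : BoundedStronglyMeasurable (uncurry f)) :
    BoundedStronglyMeasurable fun x => ∫ y, f x y ∂ν :=
  let ⟨C, hC⟩ := hf.exists_bound
  ⟨hf.stronglyMeasurable.integral_prod_right, C * ν.real univ, fun x =>
    norm_integral_le_of_norm_le_const (ae_of_all _ fun y => hC (x, y))⟩

end BoundedStronglyMeasurable

section Fubini

variable {α β γ E F G : Type*} [MeasurableSpace α] [MeasurableSpace β] [MeasurableSpace γ]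
  {μ : Measure α} {ν : Measure β} {ρ : Measure γ}
  [IsFiniteMeasure μ] [IsFiniteMeasure ν] [IsFiniteMeasure ρ]
  [NormedAddCommGroup E] [NormedSpace ℝ E] [CompleteSpace E]
  [NormedAddCommGroup F] [NormedSpace ℝ F] [CompleteSpace F]
  [NormedAddCommGroup G] [NormedSpace ℝ G] [CompleteSpace G]

theorem integral_clm_integral (ℓ : E →L[ℝ] F) {f : α → β → E}
    (hf : BoundedStronglyMeasurable (uncurry f)) :
    ∫ s, ℓ (∫ θ, f s θ ∂ν) ∂μ = ∫ θ, ∫ s, ℓ (f s θ) ∂μ ∂ν := by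
  rw [← integral_integral_swap ((hf.clm ℓ).integrable _)]
  congr 1; ext s
  exact (ℓ.integral_comp_comm ((hf.of_uncurry_left s).integrable ν)).symm

theorem integral_clm₂_integral_integral (B : E →L[ℝ] F →L[ℝ] G) {f : α → β → E}
    {g : α → γ → F} (hf : BoundedStronglyMeasurable (uncurry f))
    (hg : BoundedStronglyMeasurable (uncurry g)) :
    ∫ s, B (∫ θ, f s θ ∂ν) (∫ t, g s t ∂ρ) ∂μ = ∫ θ, ∫ t, ∫ s, B (f s θ) (g s t) ∂μ ∂ρ ∂ν := by
  have hB : BoundedStronglyMeasurable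
      (uncurry fun (p : α × β) (t : γ) => B (f p.1 p.2) (g p.1 t)) :=
    .clm₂ B (hf.comp_measurable measurable_fst)
      (hg.comp_measurable (measurable_fst.fst.prodMk measurable_snd))
  calc ∫ s, B (∫ θ, f s θ ∂ν) (∫ t, g s t ∂ρ) ∂μ
        = ∫ s, ∫ θ, ∫ t, B (f s θ) (g s t) ∂ρ ∂ν ∂μ := by
          congr 1; ext s
          have h := (B.flip (∫ t, g s t ∂ρ)).integral_comp_comm
            ((hf.of_uncurry_left s).integrable ν)
          simp only [ContinuousLinearMap.flip_apply] at h
          rw [← h]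
          congr 1; ext θ
          exact ((B (f s θ)).integral_comp_comm
            ((hg.of_uncurry_left s).integrable ρ)).symm
    _ = ∫ θ, ∫ s, ∫ t, B (f s θ) (g s t) ∂ρ ∂μ ∂ν :=
          integral_integral_swap (hB.integral_prod_right.integrable _)
    _ = ∫ θ, ∫ t, ∫ s, B (f s θ) (g s t) ∂μ ∂ρ ∂ν := by
          congr 1; ext θ
          exact integral_integral_swap ((hB.comp_measurable
            (by fun_prop : Measurable fun p : α × γ => ((p.1, θ), p.2))).integrable _)

end Fubini

section MatrixIntegral

variable {ι κ ο π : Type*} [Fintype ι] [Fintype κ] [Fintype ο] [Fintype π]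

def dotProductCLM : (ι → ℝ) →L[ℝ] (ι → ℝ) →L[ℝ] ℝ :=
  (dotProductBilin ℝ ℝ).toContinuousBilinearMap

def mulVecCLM : Matrix ι κ ℝ →L[ℝ] (κ → ℝ) →L[ℝ] (ι → ℝ) :=
  (mulVecBilin ℝ ℝ).toContinuousBilinearMap

@[simp] theorem dotProductCLM_apply (v w : ι → ℝ) : dotProductCLM v w = v ⬝ᵥ w := rfl

@[simp] theorem mulVecCLM_apply (A : Matrix ι κ ℝ) (v : κ → ℝ) : mulVecCLM A v = A *ᵥ v := rfl

@[simp] theorem mulVecCLM_flip_apply (v : κ → ℝ) (A : Matrix ι κ ℝ) :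
    (mulVecCLM : Matrix ι κ ℝ →L[ℝ] _).flip v A = A *ᵥ v := rfl

theorem mulVec_dotProduct_mulVec (A : Matrix ι κ ℝ) (B : Matrix ι ο ℝ)
    (x : κ → ℝ) (y : ο → ℝ) : A *ᵥ x ⬝ᵥ B *ᵥ y = x ⬝ᵥ (Aᵀ * B) *ᵥ y := by
  rw [dotProduct_mulVec, dotProduct_mulVec, ← vecMul_vecMul, vecMul_transpose]

theorem mulVec_dotProduct (A : Matrix ι κ ℝ) (x : κ → ℝ) (w : ι → ℝ) :
    A *ᵥ x ⬝ᵥ w = x ⬝ᵥ Aᵀ *ᵥ w := by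
  rw [dotProduct_mulVec, vecMul_transpose]

theorem intervalIntegral_mulVec_mulVec {a b : ℝ} {M : ℝ → Matrix κ ο ℝ}
    (hM : ContinuousOn M (uIcc a b)) (A : Matrix π ι ℝ) (U : Matrix ι κ ℝ) (y : ο → ℝ) :
    ∫ β in a..b, A *ᵥ (U * M β) *ᵥ y = (∫ β in a..b, A * U * M β) *ᵥ y := by
  have h := ((mulVecCLM : Matrix π ο ℝ →L[ℝ] _).flip y).intervalIntegral_comp_comm
    (ContinuousOn.intervalIntegrable (μ := volume) (u := fun β => A * U * M β) (by fun_prop))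
  simp only [mulVecCLM_flip_apply] at h
  rw [← h]
  simp only [mulVec_mulVec, Matrix.mul_assoc]

theorem intervalIntegral_mulVec_dotProduct_mulVec {a b : ℝ} {M N : ℝ → Matrix κ ο ℝ}
    (hM : ContinuousOn M (uIcc a b)) (hN : ContinuousOn N (uIcc a b))
    (V W : Matrix ι κ ℝ) (y z : ο → ℝ) :
    ∫ β in a..b, (V * M β) *ᵥ y ⬝ᵥ (W * N β) *ᵥ z
      = y ⬝ᵥ (∫ β in a..b, (M β)ᵀ * (Vᵀ * W) * N β) *ᵥ z := by
  have h := ((dotProductCLM y).comp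
      ((mulVecCLM : Matrix ο ο ℝ →L[ℝ] _).flip z)).intervalIntegral_comp_comm
    (ContinuousOn.intervalIntegrable (μ := volume) (u := fun β => (M β)ᵀ * (Vᵀ * W) * N β)
      (by fun_prop))
  simp only [ContinuousLinearMap.comp_apply, mulVecCLM_flip_apply, dotProductCLM_apply] at h
  rw [← h]
  simp only [mulVec_dotProduct_mulVec, transpose_mul, Matrix.mul_assoc]

variable {α β : Type*} [MeasurableSpace α] [MeasurableSpace β] {μ : Measure α} {ν : Measure β}
  [IsFiniteMeasure μ] [IsFiniteMeasure ν]

theorem integral_mulVec_add_integral_dotProduct_self (A : Matrix ι κ ℝ) (x : κ → ℝ)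
    {f : α → β → ι → ℝ} (hf : BoundedStronglyMeasurable (uncurry f)) :
    ∫ s, (A *ᵥ x + ∫ θ, f s θ ∂ν) ⬝ᵥ (A *ᵥ x + ∫ θ, f s θ ∂ν) ∂μ
      = μ.real univ * (x ⬝ᵥ (Aᵀ * A) *ᵥ x) + 2 * (x ⬝ᵥ ∫ θ, ∫ s, Aᵀ *ᵥ f s θ ∂μ ∂ν)
        + ∫ θ, ∫ t, ∫ s, f s θ ⬝ᵥ f s t ∂μ ∂ν ∂ν := by
  have hw : BoundedStronglyMeasurable fun s => ∫ θ, f s θ ∂ν := hf.integral_prod_right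
  have hlin := (hw.clm (mulVecCLM Aᵀ)).clm (dotProductCLM x)
  have hquad := hw.clm₂ dotProductCLM hw
  simp only [mulVecCLM_apply, dotProductCLM_apply] at hlin hquad
  have hexpand : ∀ w : ι → ℝ, (A *ᵥ x + w) ⬝ᵥ (A *ᵥ x + w)
      = x ⬝ᵥ (Aᵀ * A) *ᵥ x + 2 * (x ⬝ᵥ Aᵀ *ᵥ w) + w ⬝ᵥ w := fun w => by
    rw [add_dotProduct, dotProduct_add, dotProduct_add, mulVec_dotProduct_mulVec,
      mulVec_dotProduct, dotProduct_comm w, mulVec_dotProduct]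
    ring
  have hlin₂ : Integrable (fun s => 2 * (x ⬝ᵥ Aᵀ *ᵥ ∫ θ, f s θ ∂ν)) μ :=
    (hlin.integrable μ).const_mul 2
  have hconst_lin : Integrable
      (fun s => x ⬝ᵥ (Aᵀ * A) *ᵥ x + 2 * (x ⬝ᵥ Aᵀ *ᵥ ∫ θ, f s θ ∂ν)) μ :=
    (integrable_const _).add hlin₂
  have hlin_eq : ∫ s, x ⬝ᵥ Aᵀ *ᵥ (∫ θ, f s θ ∂ν) ∂μ = x ⬝ᵥ ∫ θ, ∫ s, Aᵀ *ᵥ f s θ ∂μ ∂ν := by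
    have h := (dotProductCLM x).integral_comp_comm ((hw.clm (mulVecCLM Aᵀ)).integrable μ)
    simp only [mulVecCLM_apply, dotProductCLM_apply] at h
    exact h.trans (congrArg (x ⬝ᵥ ·) (integral_clm_integral (mulVecCLM Aᵀ) hf))
  have hquad_eq := integral_clm₂_integral_integral (μ := μ) (ν := ν) (ρ := ν) dotProductCLM hf hf
  simp only [dotProductCLM_apply] at hquad_eq
  simp only [hexpand]
  rw [integral_add hconst_lin (hquad.integrable μ), integral_add (integrable_const _) hlin₂,
    MeasureTheory.integral_const, smul_eq_mul, MeasureTheory.integral_const_mul, hlin_eq,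
    hquad_eq]

end MatrixIntegral

theorem integral_integral_split_diagonal {E : Type*} [NormedAddCommGroup E] [NormedSpace ℝ E]
    {H : ℝ → ℝ → E} (hH : BoundedStronglyMeasurable (uncurry H)) {a b : ℝ} (hab : a ≤ b) :
    ∫ θ in a..b, ∫ t in a..b, H θ t
      = (∫ θ in a..b, ∫ t in a..θ, H θ t) + ∫ θ in a..b, ∫ t in θ..b, H θ t := by
  have hle : MeasurableSet {p : ℝ × ℝ | p.2 ≤ p.1} := measurableSet_le measurable_snd measurable_fst
  have hlow : BoundedStronglyMeasurable (uncurry fun θ t => if t ≤ θ then H θ t else 0) :=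
    .ite hle hH .zero
  have hupp : BoundedStronglyMeasurable (uncurry fun θ t => if t ≤ θ then 0 else H θ t) :=
    .ite hle .zero hH
  have hint : ∀ {f : ℝ → ℝ → E}, BoundedStronglyMeasurable (uncurry f) →
      IntervalIntegrable (fun θ => ∫ t in a..b, f θ t) volume a b := fun hf => by
    simp_rw [integral_of_le hab]
    exact hf.integral_prod_right.intervalIntegrable a b
  have hlow_eq : ∀ θ ∈ uIcc a b,
      ∫ t in a..b, (if t ≤ θ then H θ t else 0) = ∫ t in a..θ, H θ t := fun θ hθ => by
    rw [uIcc_of_le hab] at hθ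
    rw [← integral_add_adjacent_intervals ((hlow.of_uncurry_left θ).intervalIntegrable a θ)
        ((hlow.of_uncurry_left θ).intervalIntegrable θ b),
      integral_congr_Ioo_of_le hθ.1 (g := H θ) fun t ht => if_pos ht.2.le,
      integral_congr_Ioo_of_le hθ.2 (g := fun _ => 0) fun t ht => if_neg (not_le.2 ht.1),
      intervalIntegral.integral_zero, add_zero]
  have hupp_eq : ∀ θ ∈ uIcc a b,
      ∫ t in a..b, (if t ≤ θ then 0 else H θ t) = ∫ t in θ..b, H θ t := fun θ hθ => by
    rw [uIcc_of_le hab] at hθ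
    rw [← integral_add_adjacent_intervals ((hupp.of_uncurry_left θ).intervalIntegrable a θ)
        ((hupp.of_uncurry_left θ).intervalIntegrable θ b),
      integral_congr_Ioo_of_le hθ.1 (g := fun _ => 0) fun t ht => if_pos ht.2.le,
      integral_congr_Ioo_of_le hθ.2 (g := H θ) fun t ht => if_neg (not_le.2 ht.1),
      intervalIntegral.integral_zero, zero_add]
  calc ∫ θ in a..b, ∫ t in a..b, H θ t
      = ∫ θ in a..b, (∫ t in a..b, if t ≤ θ then H θ t else 0)
          + ∫ t in a..b, if t ≤ θ then 0 else H θ t := integral_congr fun θ _ => by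
        rw [← integral_add ((hlow.of_uncurry_left θ).intervalIntegrable a b)
          ((hupp.of_uncurry_left θ).intervalIntegrable a b)]
        congr 1; ext t; split_ifs <;> simp
    _ = _ := by rw [integral_add (hint hlow) (hint hupp), integral_congr hlow_eq,
        integral_congr hupp_eq]

theorem ContinuousOn.boundedStronglyMeasurable_comp_projIcc {E : Type*} [NormedAddCommGroup E]
    {a b : ℝ} (h : a ≤ b) {F : ℝ × ℝ → E} (hF : ContinuousOn F (Icc a b ×ˢ Icc a b)) :
    BoundedStronglyMeasurable fun p : ℝ × ℝ =>
      F ((projIcc a b h p.1 : ℝ), (projIcc a b h p.2 : ℝ)) := by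
  have hmaps : ∀ p : ℝ × ℝ,
      ((projIcc a b h p.1 : ℝ), (projIcc a b h p.2 : ℝ)) ∈ Icc a b ×ˢ Icc a b :=
    fun p => ⟨(projIcc a b h p.1).2, (projIcc a b h p.2).2⟩
  obtain ⟨C, hC⟩ := (isCompact_Icc.prod isCompact_Icc).exists_bound_of_continuousOn hF
  exact ⟨(hF.comp_continuous (by fun_prop) hmaps).stronglyMeasurable, C, fun p => hC _ (hmaps p)⟩

section PiecewiseKernel

variable {m n d d₂ : ℕ} {L : ℝ} {Z : ℝ → ℝ → Matrix (Fin d₂) (Fin n) ℝ} {x : ℝ → Fin n → ℝ}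
  {U₂ U₃ : Matrix (Fin d) (Fin d₂) ℝ} {k : ℝ → ℝ → Fin d → ℝ}

structure IsPiecewiseKernel (L : ℝ) (Z : ℝ → ℝ → Matrix (Fin d₂) (Fin n) ℝ) (x : ℝ → Fin n → ℝ)
    (U₂ U₃ : Matrix (Fin d) (Fin d₂) ℝ) (k : ℝ → ℝ → Fin d → ℝ) : Prop where
  boundedStronglyMeasurable : BoundedStronglyMeasurable (uncurry k)
  eq_of_le ⦃s θ : ℝ⦄ : 0 ≤ θ → θ ≤ s → s ≤ L → k s θ = (U₂ * Z s θ) *ᵥ x θ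
  eq_of_lt ⦃s θ : ℝ⦄ : 0 ≤ s → s < θ → θ ≤ L → k s θ = (U₃ * Z s θ) *ᵥ x θ

theorem exists_isPiecewiseKernel (hL : 0 ≤ L)
    (hZ : ContinuousOn (fun p : ℝ × ℝ => Z p.1 p.2) (Icc 0 L ×ˢ Icc 0 L))
    (hx : ContinuousOn x (Icc 0 L)) (U₂ U₃ : Matrix (Fin d) (Fin d₂) ℝ) :
    ∃ k, IsPiecewiseKernel L Z x U₂ U₃ k := by
  let c : ℝ → ℝ := fun s => projIcc 0 L hL s
  have hc : Continuous c := continuous_subtype_val.comp continuous_projIcc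
  have hc_eq : ∀ s ∈ Icc 0 L, c s = s := fun s hs => congrArg Subtype.val (projIcc_of_mem hL hs)
  have hF : ∀ U : Matrix (Fin d) (Fin d₂) ℝ,
      BoundedStronglyMeasurable fun p : ℝ × ℝ => (U * Z (c p.1) (c p.2)) *ᵥ x (c p.2) := by
    intro U
    have hxp : ContinuousOn (fun p : ℝ × ℝ => x p.2) (Icc 0 L ×ˢ Icc 0 L) :=
      hx.comp continuousOn_snd fun p hp => hp.2
    have hmv : Continuous fun q : Matrix (Fin d₂) (Fin n) ℝ × (Fin n → ℝ) => (U * q.1) *ᵥ q.2 := by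
      fun_prop
    exact (hmv.comp_continuousOn (hZ.prodMk hxp)).boundedStronglyMeasurable_comp_projIcc hL
  refine ⟨fun s θ => if c θ ≤ c s then (U₂ * Z (c s) (c θ)) *ᵥ x (c θ)
      else (U₃ * Z (c s) (c θ)) *ᵥ x (c θ), ?_, fun s θ h0 hθs hsL => ?_,
    fun s θ h0 hsθ hθL => ?_⟩
  · exact .ite (p := fun p : ℝ × ℝ => c p.2 ≤ c p.1)
      (measurableSet_le (hc.measurable.comp measurable_snd) (hc.measurable.comp measurable_fst))
      (hF U₂) (hF U₃)
  · simp only [hc_eq s ⟨h0.trans hθs, hsL⟩, hc_eq θ ⟨h0, hθs.trans hsL⟩, if_pos hθs]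
  · simp only [hc_eq s ⟨h0, hsθ.le.trans hθL⟩, hc_eq θ ⟨h0.trans hsθ.le, hθL⟩,
      if_neg (not_le.2 hsθ)]

theorem integral_dotProduct_eq_of_eqOn_Ioo
    (hZ : ContinuousOn (fun p : ℝ × ℝ => Z p.1 p.2) (Icc 0 L ×ˢ Icc 0 L))
    {a b θ t : ℝ} (ha : 0 ≤ a) (hab : a ≤ b) (hb : b ≤ L) (hθ : θ ∈ Icc 0 L) (ht : t ∈ Icc 0 L)
    {V W : Matrix (Fin d) (Fin d₂) ℝ} (hkθ : ∀ β ∈ Ioo a b, k β θ = (V * Z β θ) *ᵥ x θ)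
    (hkt : ∀ β ∈ Ioo a b, k β t = (W * Z β t) *ᵥ x t) :
    ∫ β in a..b, k β θ ⬝ᵥ k β t = x θ ⬝ᵥ (∫ β in a..b, (Z β θ)ᵀ * (Vᵀ * W) * Z β t) *ᵥ x t := by
  have hsub : uIcc a b ⊆ Icc 0 L := uIcc_subset_Icc ⟨ha, hab.trans hb⟩ ⟨ha.trans hab, hb⟩
  have hZ' : ∀ τ ∈ Icc 0 L, ContinuousOn (fun β => Z β τ) (uIcc a b) := fun τ hτ =>
    hZ.comp (continuousOn_id.prodMk continuousOn_const) fun β hβ => ⟨hsub hβ, hτ⟩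
  refine (integral_congr_Ioo_of_le hab fun β hβ => ?_).trans
    (intervalIntegral_mulVec_dotProduct_mulVec (hZ' θ hθ) (hZ' t ht) V W (x θ) (x t))
  simp only [hkθ β hβ, hkt β hβ]

namespace IsPiecewiseKernel

theorem integral_eq (hk : IsPiecewiseKernel L Z x U₂ U₃ k) {s : ℝ} (hs : s ∈ Icc 0 L) :
    ∫ θ in 0..L, k s θ
      = (∫ θ in 0..s, (U₂ * Z s θ) *ᵥ x θ) + ∫ θ in s..L, (U₃ * Z s θ) *ᵥ x θ := by
  have hks := hk.boundedStronglyMeasurable.of_uncurry_left s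
  rw [← integral_add_adjacent_intervals (hks.intervalIntegrable 0 s) (hks.intervalIntegrable s L)]
  congr 1
  · exact integral_congr_Ioo_of_le hs.1 fun θ hθ => hk.eq_of_le hθ.1.le hθ.2.le hs.2
  · exact integral_congr_Ioo_of_le hs.2 fun θ hθ => hk.eq_of_lt hs.1 hθ.1 hθ.2.le

theorem integral_dotProduct_self (hk : IsPiecewiseKernel L Z x U₂ U₃ k) (hL : 0 ≤ L)
    (A : Matrix (Fin d) (Fin m) ℝ) (y : Fin m → ℝ) :
    ∫ s in 0..L, (A *ᵥ y + (∫ θ in 0..s, (U₂ * Z s θ) *ᵥ x θ) + ∫ θ in s..L, (U₃ * Z s θ) *ᵥ x θ)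
        ⬝ᵥ (A *ᵥ y + (∫ θ in 0..s, (U₂ * Z s θ) *ᵥ x θ) + ∫ θ in s..L, (U₃ * Z s θ) *ᵥ x θ)
      = L * (y ⬝ᵥ (Aᵀ * A) *ᵥ y) + 2 * (y ⬝ᵥ ∫ θ in 0..L, ∫ s in 0..L, Aᵀ *ᵥ k s θ)
        + (∫ θ in 0..L, ∫ t in 0..θ, ∫ s in 0..L, k s θ ⬝ᵥ k s t)
        + ∫ θ in 0..L, ∫ t in θ..L, ∫ s in 0..L, k s θ ⬝ᵥ k s t := by
  have hkk : BoundedStronglyMeasurable (uncurry fun θ t => ∫ s in 0..L, k s θ ⬝ᵥ k s t) := by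
    simp only [integral_of_le hL]
    exact BoundedStronglyMeasurable.integral_prod_right (f := fun (p : ℝ × ℝ) s => k s p.1 ⬝ᵥ k s p.2)
      (.clm₂ dotProductCLM
        (hk.boundedStronglyMeasurable.comp_measurable (φ := fun q : (ℝ × ℝ) × ℝ => (q.2, q.1.1))
          (by fun_prop))
        (hk.boundedStronglyMeasurable.comp_measurable (φ := fun q : (ℝ × ℝ) × ℝ => (q.2, q.1.2))
          (by fun_prop)))
  calc _ = ∫ s in Ioc 0 L, (A *ᵥ y + ∫ θ in Ioc 0 L, k s θ) ⬝ᵥ (A *ᵥ y + ∫ θ in Ioc 0 L, k s θ) := by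
        rw [integral_of_le hL]
        refine setIntegral_congr_fun measurableSet_Ioc fun s hs => ?_
        rw [← integral_of_le hL, hk.integral_eq (Ioc_subset_Icc_self hs), add_assoc]
    _ = _ := by
        rw [integral_mulVec_add_integral_dotProduct_self _ _ hk.boundedStronglyMeasurable,
          measureReal_restrict_apply_univ, Real.volume_real_Ioc_of_le hL, sub_zero]
        have hsplit := integral_integral_split_diagonal hkk hL
        simp only [integral_of_le hL] at hsplit ⊢
        rw [hsplit]
        ring

theorem integral_mulVec_eq (hk : IsPiecewiseKernel L Z x U₂ U₃ k)
    (hZ : ContinuousOn (fun p : ℝ × ℝ => Z p.1 p.2) (Icc 0 L ×ˢ Icc 0 L))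
    (A : Matrix (Fin m) (Fin d) ℝ) {θ : ℝ} (hθ : θ ∈ Icc 0 L) :
    ∫ s in 0..L, A *ᵥ k s θ
      = ((∫ s in θ..L, A * U₂ * Z s θ) + ∫ s in 0..θ, A * U₃ * Z s θ) *ᵥ x θ := by
  have hkθ : BoundedStronglyMeasurable fun s => A *ᵥ k s θ :=
    (hk.boundedStronglyMeasurable.of_uncurry_right θ).clm (mulVecCLM A)
  have hZθ : ContinuousOn (fun s => Z s θ) (Icc 0 L) :=
    hZ.comp (continuousOn_id.prodMk continuousOn_const) fun s hs => ⟨hs, hθ⟩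
  have h0 : (0 : ℝ) ∈ Icc 0 L := ⟨le_rfl, hθ.1.trans hθ.2⟩
  have hL : L ∈ Icc 0 L := ⟨hθ.1.trans hθ.2, le_rfl⟩
  rw [← integral_add_adjacent_intervals (hkθ.intervalIntegrable 0 θ) (hkθ.intervalIntegrable θ L),
    add_comm, add_mulVec,
    integral_congr_Ioo_of_le hθ.2 fun s hs => congrArg (A *ᵥ ·) (hk.eq_of_le hθ.1 hs.1.le hs.2.le),
    integral_congr_Ioo_of_le hθ.1 fun s hs => congrArg (A *ᵥ ·) (hk.eq_of_lt hs.1.le hs.2 hθ.2),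
    intervalIntegral_mulVec_mulVec (hZθ.mono (uIcc_subset_Icc hθ hL)),
    intervalIntegral_mulVec_mulVec (hZθ.mono (uIcc_subset_Icc h0 hθ))]

theorem integral_dotProduct_eq_of_le (hk : IsPiecewiseKernel L Z x U₂ U₃ k)
    (hZ : ContinuousOn (fun p : ℝ × ℝ => Z p.1 p.2) (Icc 0 L ×ˢ Icc 0 L))
    {θ t : ℝ} (hθ : θ ∈ Icc 0 L) (ht : t ∈ Icc 0 L) (htθ : t ≤ θ) :
    ∫ s in 0..L, k s θ ⬝ᵥ k s t
      = x θ ⬝ᵥ ((∫ β in θ..L, (Z β θ)ᵀ * (U₂ᵀ * U₂) * Z β t)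
          + (∫ β in t..θ, (Z β θ)ᵀ * (U₃ᵀ * U₂) * Z β t)
          + ∫ β in 0..t, (Z β θ)ᵀ * (U₃ᵀ * U₃) * Z β t) *ᵥ x t := by
  have hG : BoundedStronglyMeasurable fun s => k s θ ⬝ᵥ k s t :=
    (hk.boundedStronglyMeasurable.of_uncurry_right θ).clm₂ dotProductCLM
      (hk.boundedStronglyMeasurable.of_uncurry_right t)
  rw [← integral_add_adjacent_intervals (hG.intervalIntegrable 0 θ) (hG.intervalIntegrable θ L),
    ← integral_add_adjacent_intervals (hG.intervalIntegrable 0 t) (hG.intervalIntegrable t θ),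
    integral_dotProduct_eq_of_eqOn_Ioo hZ hθ.1 hθ.2 le_rfl hθ ht
      (fun β hβ => hk.eq_of_le hθ.1 hβ.1.le hβ.2.le)
      (fun β hβ => hk.eq_of_le ht.1 (htθ.trans hβ.1.le) hβ.2.le),
    integral_dotProduct_eq_of_eqOn_Ioo hZ ht.1 htθ hθ.2 hθ ht
      (fun β hβ => hk.eq_of_lt (ht.1.trans hβ.1.le) hβ.2 hθ.2)
      (fun β hβ => hk.eq_of_le ht.1 hβ.1.le (hβ.2.le.trans hθ.2)),
    integral_dotProduct_eq_of_eqOn_Ioo hZ le_rfl ht.1 ht.2 hθ ht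
      (fun β hβ => hk.eq_of_lt hβ.1.le (hβ.2.trans_le htθ) hθ.2)
      (fun β hβ => hk.eq_of_lt hβ.1.le hβ.2 ht.2),
    add_mulVec, add_mulVec, dotProduct_add, dotProduct_add]
  ring

theorem integral_dotProduct_eq_of_ge (hk : IsPiecewiseKernel L Z x U₂ U₃ k)
    (hZ : ContinuousOn (fun p : ℝ × ℝ => Z p.1 p.2) (Icc 0 L ×ˢ Icc 0 L))
    {θ t : ℝ} (hθ : θ ∈ Icc 0 L) (ht : t ∈ Icc 0 L) (hθt : θ ≤ t) :
    ∫ s in 0..L, k s θ ⬝ᵥ k s t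
      = x θ ⬝ᵥ ((∫ β in t..L, (Z β θ)ᵀ * (U₂ᵀ * U₂) * Z β t)
          + (∫ β in θ..t, (Z β θ)ᵀ * (U₂ᵀ * U₃) * Z β t)
          + ∫ β in 0..θ, (Z β θ)ᵀ * (U₃ᵀ * U₃) * Z β t) *ᵥ x t := by
  have hG : BoundedStronglyMeasurable fun s => k s θ ⬝ᵥ k s t :=
    (hk.boundedStronglyMeasurable.of_uncurry_right θ).clm₂ dotProductCLM
      (hk.boundedStronglyMeasurable.of_uncurry_right t)
  rw [← integral_add_adjacent_intervals (hG.intervalIntegrable 0 t) (hG.intervalIntegrable t L),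
    ← integral_add_adjacent_intervals (hG.intervalIntegrable 0 θ) (hG.intervalIntegrable θ t),
    integral_dotProduct_eq_of_eqOn_Ioo hZ ht.1 ht.2 le_rfl hθ ht
      (fun β hβ => hk.eq_of_le hθ.1 (hθt.trans hβ.1.le) hβ.2.le)
      (fun β hβ => hk.eq_of_le ht.1 hβ.1.le hβ.2.le),
    integral_dotProduct_eq_of_eqOn_Ioo hZ hθ.1 hθt ht.2 hθ ht
      (fun β hβ => hk.eq_of_le hθ.1 hβ.1.le (hβ.2.le.trans ht.2))
      (fun β hβ => hk.eq_of_lt (hθ.1.trans hβ.1.le) hβ.2 ht.2),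
    integral_dotProduct_eq_of_eqOn_Ioo hZ le_rfl hθ.1 hθ.2 hθ ht
      (fun β hβ => hk.eq_of_lt hβ.1.le hβ.2 hθ.2)
      (fun β hβ => hk.eq_of_lt hβ.1.le (hβ.2.trans_le hθt) ht.2),
    add_mulVec, add_mulVec, dotProduct_add, dotProduct_add]
  ring

end IsPiecewiseKernel

end PiecewiseKernel

theorem Matrix.submatrix_transpose_mul_self {m n p q R : Type*} [Fintype m]
    [NonUnitalNonAssocSemiring R] (M : Matrix m n R) (f : p → n) (g : q → n) :
    (Mᵀ * M).submatrix f g = (M.submatrix id f)ᵀ * M.submatrix id g := by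
  rw [submatrix_mul _ _ _ id _ Function.bijective_id, transpose_submatrix]

theorem square_root_factorization_identity_general
    (n m d d₂ : ℕ)
    (L : ℝ) (hL : 0 < L)
    (Z : ℝ → ℝ → Matrix (Fin d₂) (Fin n) ℝ)
    (hZ : ContinuousOn (fun p : ℝ × ℝ => Z p.1 p.2) (Set.Icc (0:ℝ) L ×ˢ Set.Icc (0:ℝ) L))
    (U1 : Matrix (Fin d) (Fin m) ℝ) (U2 U3 : Matrix (Fin d) (Fin d₂) ℝ)
    (Ph : Matrix (Fin m) (Fin m) ℝ) (Q : ℝ → Matrix (Fin m) (Fin n) ℝ)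
    (R1 R2 : ℝ → ℝ → Matrix (Fin n) (Fin n) ℝ)
    (hPQR : JointFormulas n m d₂ L Z
      ((Matrix.fromCols U1 (Matrix.fromCols U2 U3))ᵀ *
        Matrix.fromCols U1 (Matrix.fromCols U2 U3)) Ph Q R1 R2)
    (x1 : Fin m → ℝ) (x2 : ℝ → Fin n → ℝ) (hx2 : ContinuousOn x2 (Set.Icc (0:ℝ) L))
    (v : ℝ → Fin d → ℝ)
    (hv : ∀ s : ℝ, v s = U1 *ᵥ x1 + (∫ θ in (0:ℝ)..s, (U2 * Z s θ) *ᵥ x2 θ)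
      + ∫ θ in s..L, (U3 * Z s θ) *ᵥ x2 θ) :
    ∫ s in (0:ℝ)..L, v s ⬝ᵥ v s
      = L * (x1 ⬝ᵥ (Ph *ᵥ x1)) + 2 * (x1 ⬝ᵥ ∫ θ in (0:ℝ)..L, Q θ *ᵥ x2 θ)
        + (∫ s in (0:ℝ)..L, ∫ θ in (0:ℝ)..s, x2 s ⬝ᵥ (R1 s θ *ᵥ x2 θ))
        + ∫ s in (0:ℝ)..L, ∫ θ in s..L, x2 s ⬝ᵥ (R2 s θ *ᵥ x2 θ) := by
  obtain ⟨hPh, hQ, hR1, hR2⟩ := hPQR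
  have h₁ : (fromCols U1 (fromCols U2 U3)).submatrix id Sum.inl = U1 := by ext; simp
  have h₂ : (fromCols U1 (fromCols U2 U3)).submatrix id (Sum.inr ∘ Sum.inl) = U2 := by ext; simp
  have h₃ : (fromCols U1 (fromCols U2 U3)).submatrix id (Sum.inr ∘ Sum.inr) = U3 := by ext; simp
  simp only [submatrix_transpose_mul_self, h₁, h₂, h₃] at hPh hQ hR1 hR2
  obtain ⟨k, hk⟩ := exists_isPiecewiseKernel hL.le hZ hx2 U2 U3
  have hIcc : ∀ {s : ℝ}, s ∈ uIcc 0 L → s ∈ Icc 0 L := fun hs => by rwa [uIcc_of_le hL.le] at hs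
  have hlin : ∫ θ in 0..L, ∫ s in 0..L, U1ᵀ *ᵥ k s θ = ∫ θ in 0..L, Q θ *ᵥ x2 θ :=
    integral_congr fun θ hθ => by rw [hk.integral_mulVec_eq hZ U1ᵀ (hIcc hθ), hQ]
  have hlow : ∫ θ in 0..L, ∫ t in 0..θ, ∫ s in 0..L, k s θ ⬝ᵥ k s t
      = ∫ θ in 0..L, ∫ t in 0..θ, x2 θ ⬝ᵥ R1 θ t *ᵥ x2 t :=
    integral_congr fun θ hθ => integral_congr fun t ht => by
      rw [uIcc_of_le (hIcc hθ).1] at ht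
      rw [hR1 θ t ht.2, hk.integral_dotProduct_eq_of_le hZ (hIcc hθ)
        ⟨ht.1, ht.2.trans (hIcc hθ).2⟩ ht.2]
  have hupp : ∫ θ in 0..L, ∫ t in θ..L, ∫ s in 0..L, k s θ ⬝ᵥ k s t
      = ∫ θ in 0..L, ∫ t in θ..L, x2 θ ⬝ᵥ R2 θ t *ᵥ x2 t :=
    integral_congr fun θ hθ => integral_congr fun t ht => by
      rw [uIcc_of_le (hIcc hθ).2] at ht
      rw [hR2 θ t ht.1, hk.integral_dotProduct_eq_of_ge hZ (hIcc hθ)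
        ⟨(hIcc hθ).1.trans ht.1, ht.2⟩ ht.1]
  simp only [hv]
  rw [hk.integral_dotProduct_self hL.le, hPh, hlin, hlow, hupp]

theorem square_root_factorization_identity
    (n m d d₂ : ℕ) (hn : 1 ≤ n) (hm : 1 ≤ m) (hd : 1 ≤ d) (hd₂ : 1 ≤ d₂)
    (L : ℝ) (hL : 0 < L)
    (Z : ℝ → ℝ → Matrix (Fin d₂) (Fin n) ℝ)
    (hZ : ContinuousOn (fun p : ℝ × ℝ => Z p.1 p.2) (Set.Icc (0:ℝ) L ×ˢ Set.Icc (0:ℝ) L))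
    (U1 : Matrix (Fin d) (Fin m) ℝ) (U2 U3 : Matrix (Fin d) (Fin d₂) ℝ)
    (Ph : Matrix (Fin m) (Fin m) ℝ) (Q : ℝ → Matrix (Fin m) (Fin n) ℝ)
    (R1 R2 : ℝ → ℝ → Matrix (Fin n) (Fin n) ℝ)
    (hPQR : JointFormulas n m d₂ L Z
      ((Matrix.fromCols U1 (Matrix.fromCols U2 U3))ᵀ *
        Matrix.fromCols U1 (Matrix.fromCols U2 U3)) Ph Q R1 R2)
    (x1 : Fin m → ℝ) (x2 : ℝ → Fin n → ℝ) (hx2 : ContinuousOn x2 (Set.Icc (0:ℝ) L))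
    (v : ℝ → Fin d → ℝ)
    (hv : ∀ s : ℝ, v s = U1 *ᵥ x1 + (∫ θ in (0:ℝ)..s, (U2 * Z s θ) *ᵥ x2 θ)
      + ∫ θ in s..L, (U3 * Z s θ) *ᵥ x2 θ) :
    ∫ s in (0:ℝ)..L, v s ⬝ᵥ v s
      = L * (x1 ⬝ᵥ (Ph *ᵥ x1)) + 2 * (x1 ⬝ᵥ ∫ θ in (0:ℝ)..L, Q θ *ᵥ x2 θ)
        + (∫ s in (0:ℝ)..L, ∫ θ in (0:ℝ)..s, x2 s ⬝ᵥ (R1 s θ *ᵥ x2 θ))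
        + ∫ s in (0:ℝ)..L, ∫ θ in s..L, x2 s ⬝ᵥ (R2 s θ *ᵥ x2 θ) :=
  square_root_factorization_identity_general n m d d₂ L hL Z hZ U1 U2 U3 Ph Q R1 R2 hPQR x1 x2 hx2 v
    hv
end
end
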